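/- arXiv:1611.03707 — 7 statements merged into one kernel-verified Lean document; each statement's English description precedes it below -/
import Mathlib

section
/- Let 1 ≤ r ≤ n be integers. The number of rook words a of length n with run(a) = r equals r! · Σ (n−1)^{e_1} · (n−2)^{e_2} ⋯ (n−r)^{e_r}, where the sum is over all r-tuples (e_1,…,e_r) of nonnegative integers with e_1 + ⋯ + e_r = n − r. -/
open Finset

noncomputable section
open scoped Classical

/-- `a : Fin n → Fin n` encodes a word `(a_1,…,a_n) ∈ {1,…,n}^n` via `a_i = (a i) + 1`
(i.e. the `Fin n` value is the 1-based letter minus one). -/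
def IsParkingFunction {n : ℕ} (a : Fin n → Fin n) : Prop :=
  ∀ i : Fin n, (i : ℕ) + 1 ≤ (Finset.univ.filter (fun j => a j ≤ i)).card

/-- `X = {x_1 < … < x_ℓ}` is centered for `a` iff `a_{x_i} ≤ i` for all `i`, i.e. the 1-based
value at `x` is at most the rank of `x` in `X`. -/
def Centered {n : ℕ} (a : Fin n → Fin n) (X : Finset (Fin n)) : Prop :=
  ∀ x ∈ X, (a x : ℕ) + 1 ≤ (X.filter (fun y => y ≤ x)).card

/-- `z(a)`: the maximum cardinality of a centered set for `a`. -/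
def zOf {n : ℕ} (a : Fin n → Fin n) : ℕ :=
  sSup {k : ℕ | ∃ X : Finset (Fin n), Centered a X ∧ X.card = k}

/-- `run(a)`: the largest `i` such that all 1-based values `1,…,i` occur in `a` (0 if none). -/
def runOf {n : ℕ} (a : Fin n → Fin n) : ℕ :=
  ((Finset.range n).filter (fun i => ∀ j ≤ i, ∃ x : Fin n, (a x : ℕ) = j)).card

/-- `Run(a)`: the set of positions `j` that are the last occurrence of some 1-based value
`≤ run(a)`. -/
def RunSet {n : ℕ} (a : Fin n → Fin n) : Finset (Fin n) :=
  Finset.univ.filter (fun j => (a j : ℕ) < runOf a ∧ ∀ j' : Fin n, j < j' → a j' ≠ a j)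

/-- A rook word: the first letter is at most `run(a)`. -/
def IsRookWord {n : ℕ} (a : Fin n → Fin n) : Prop :=
  ∃ h : 0 < n, (a ⟨0, h⟩ : ℕ) + 1 ≤ runOf a

/-- `LegEq T k` : depth-first search from `0`, always preferring the largest unvisited neighbour,
visits exactly `k` non-root vertices before the first backtracking. -/
def LegEq {n : ℕ} (T : SimpleGraph (Fin (n + 1))) (k : ℕ) : Prop :=
  ∃ v : Fin (k + 1) → Fin (n + 1),
    v 0 = 0 ∧
    (∀ i : Fin k,
      T.Adj (v i.castSucc) (v i.succ) ∧
      (∀ j : Fin (k + 1), j ≤ i.castSucc → v i.succ ≠ v j) ∧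
      (∀ w : Fin (n + 1), T.Adj (v i.castSucc) w →
        (∀ j : Fin (k + 1), j ≤ i.castSucc → w ≠ v j) → w ≤ v i.succ)) ∧
    (∀ w : Fin (n + 1), T.Adj (v (Fin.last k)) w → ∃ j : Fin (k + 1), w = v j)

/-- `Nbr [ℓ_1,…,ℓ_m]` is the number of tuples `(x_0,…,x_m)` with `x_0 = 0` and
`x_{i-1} < x_i ≤ ℓ_1 + ⋯ + ℓ_i` for all `i`. -/
def Nbr (L : List ℤ) : ℕ :=
  Nat.card {x : Fin (L.length + 1) → ℤ //
    x 0 = 0 ∧ ∀ i : Fin L.length,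
      x i.castSucc < x i.succ ∧ x i.succ ≤ (L.take ((i : ℕ) + 1)).sum}

/-- The cyclic sum `s(ℓ)` of the paper (indices of `ℓ` read modulo `k`). -/
def cycS (k r : ℕ) (t : ℤ) (ℓ : ℕ → ℕ) : ℕ :=
  ∑ i ∈ Finset.range k,
    Nbr (((∑ j ∈ Finset.range r, (ℓ ((i + j + 1) % k) : ℤ)) + t) ::
      List.ofFn (fun p : Fin (k - r - 1) => (ℓ ((i + r + 1 + (p : ℕ)) % k) : ℤ)))

/-- `B` is the coimage of `a`: the ordered partition of positions into fibers of `a`,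
ordered by increasing value. -/
def IsCoimage {n k : ℕ} (a : Fin n → Fin n) (B : Fin k → Finset (Fin n)) : Prop :=
  (∀ j, (B j).Nonempty) ∧
  (∀ x : Fin n, ∃ j, x ∈ B j) ∧
  (∀ j j' : Fin k, ∀ x ∈ B j, ∀ y ∈ B j', (a x = a y ↔ j = j')) ∧
  (∀ j j' : Fin k, ∀ x ∈ B j, ∀ y ∈ B j', j < j' → a x < a y)

/-- `a` is of type `𝔄` iff its coimage is a cyclic rotation of `𝔄`. -/
def IsOfType {n k : ℕ} (a : Fin n → Fin n) (A : Fin k → Finset (Fin n)) : Prop :=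
  ∃ s : ℕ, s < k ∧ IsCoimage a (fun j => A ⟨((j : ℕ) + s) % k, Nat.mod_lt _ j.pos⟩)


/-!
Letters are encoded `0, …, n - 1`, so `runOf a = r` says that `a` attains every value `< r` but
not the value `r`, and a rook word with run `r` is such a word whose first letter is `< r`.

For an alphabet `Γ` and a set `T ⊆ Γ` of `s` letters, splitting the words of length `m + 1` over
`Γ` that use every letter of `T` according to their first letter gives
`W(m + 1, T) = (|Γ| - s) W(m, T) + ∑_{c ∈ T} W(m, T \ {c})`, which is solved by
`W(m, T) = s! h_{m-s}(|Γ|, |Γ| - 1, …, |Γ| - s)` with `h_q` the complete homogeneous symmetric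
polynomial: its recursion `h_{q+1}(x_0, …, x_s) = h_{q+1}(x_0, …, x_{s-1}) + x_s h_q(x_0, …, x_s)`
matches the one of `W`. A rook word with run `r` is a first letter `c < r` followed by a word over
the `n - 1` letters other than `r` using every letter `< r` except `c`, so there are
`r · (r - 1)! h_{n-r}(n - 1, …, n - r)` of them.
-/

def completeHomogeneous (f : ℕ → ℕ) (k q : ℕ) : ℕ :=
  ∑ e ∈ Finset.Nat.antidiagonalTuple k q, ∏ i : Fin k, f i ^ e i

theorem completeHomogeneous_zero_right (f : ℕ → ℕ) (k : ℕ) :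
    completeHomogeneous f k 0 = 1 := by
  simp [completeHomogeneous, Finset.Nat.antidiagonalTuple_zero_right]

theorem completeHomogeneous_zero_succ (f : ℕ → ℕ) (q : ℕ) :
    completeHomogeneous f 0 (q + 1) = 0 := by
  simp [completeHomogeneous, Finset.Nat.antidiagonalTuple_zero_succ]

theorem completeHomogeneous_succ_eq_sum_antidiagonal (f : ℕ → ℕ) (k q : ℕ) :
    completeHomogeneous f (k + 1) q =
      ∑ p ∈ antidiagonal q, completeHomogeneous f k p.1 * f k ^ p.2 := by
  simp only [completeHomogeneous, Finset.sum_mul]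
  rw [Finset.sum_sigma']
  refine Finset.sum_nbij' (fun e => ⟨(∑ i, Fin.init e i, e (Fin.last k)), Fin.init e⟩)
    (fun p => Fin.snoc p.2 p.1.2) ?_ ?_ ?_ ?_ ?_
  · intro e he
    simp only [Finset.Nat.mem_antidiagonalTuple, Fin.sum_univ_castSucc] at he
    simp [Finset.Nat.mem_antidiagonalTuple, he, Fin.init]
  · rintro ⟨⟨a, b⟩, e⟩ hp
    simp only [mem_sigma, HasAntidiagonal.mem_antidiagonal, Finset.Nat.mem_antidiagonalTuple] at hp
    simp [Finset.Nat.mem_antidiagonalTuple, Fin.sum_univ_castSucc, hp.1, hp.2]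
  · intro e _
    exact Fin.snoc_init_self e
  · rintro ⟨⟨a, b⟩, e⟩ hp
    simp only [mem_sigma, HasAntidiagonal.mem_antidiagonal, Finset.Nat.mem_antidiagonalTuple] at hp
    simp [Fin.init_snoc, hp.2]
  · intro e _
    simp [Fin.prod_univ_castSucc, Fin.init]

theorem completeHomogeneous_succ_succ (f : ℕ → ℕ) (k q : ℕ) :
    completeHomogeneous f (k + 1) (q + 1) =
      completeHomogeneous f k (q + 1) + f k * completeHomogeneous f (k + 1) q := by
  rw [completeHomogeneous_succ_eq_sum_antidiagonal, Finset.Nat.sum_antidiagonal_succ',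
    completeHomogeneous_succ_eq_sum_antidiagonal, Finset.mul_sum]
  simp only [pow_zero, mul_one, pow_succ]
  congr 1
  exact Finset.sum_congr rfl fun p _ => by ring

section CoveringWords

variable {α : Type*} [Fintype α] [DecidableEq α]

def coveringWords (Γ T : Finset α) (m : ℕ) : Finset (Fin m → α) :=
  {w | (∀ i, w i ∈ Γ) ∧ ∀ t ∈ T, ∃ i, w i = t}

theorem card_coveringWords_of_lt {Γ T : Finset α} {m : ℕ} (h : m < #T) :
    #(coveringWords Γ T m) = 0 := by
  refine card_eq_zero.mpr (eq_empty_of_forall_notMem fun w hw => ?_)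
  have hT : T ⊆ univ.image w := fun t ht => by
    obtain ⟨i, rfl⟩ := (mem_filter.mp hw).2.2 t ht
    exact mem_image_of_mem w (mem_univ i)
  have := (card_le_card hT).trans (card_image_le.trans_eq (card_fin m))
  omega

theorem card_filter_coveringWords_head_eq {Γ : Finset α} (T : Finset α) (m : ℕ) {c : α}
    (hc : c ∈ Γ) :
    #{w ∈ coveringWords Γ T (m + 1) | w 0 = c} = #(coveringWords Γ (T.erase c) m) := by
  refine card_nbij' (fun w => Fin.tail w) (fun w => Fin.cons c w) ?_ ?_ ?_ ?_
  · intro w hw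
    simp only [coveringWords, coe_filter, mem_filter, mem_univ, true_and] at hw ⊢
    obtain ⟨⟨hΓ, hT⟩, h0⟩ := hw
    refine ⟨fun i => hΓ i.succ, fun t ht => ?_⟩
    obtain ⟨i, hi⟩ := hT t (mem_of_mem_erase ht)
    cases i using Fin.cases with
    | zero => exact absurd (h0 ▸ hi).symm (ne_of_mem_erase ht)
    | succ i => exact ⟨i, hi⟩
  · intro w hw
    simp only [coveringWords, coe_filter, mem_filter, mem_univ, true_and] at hw ⊢
    obtain ⟨hΓ, hT⟩ := hw
    refine ⟨⟨Fin.cases hc hΓ, fun t ht => ?_⟩, rfl⟩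
    by_cases htc : t = c
    · exact ⟨0, htc.symm⟩
    · obtain ⟨i, hi⟩ := hT t (mem_erase.mpr ⟨htc, ht⟩)
      exact ⟨i.succ, hi⟩
  · intro w hw
    simp only [coe_filter] at hw
    rw [← hw.2]
    exact Fin.cons_self_tail w
  · intro w _
    exact Fin.tail_cons _ _

theorem card_filter_coveringWords_head_mem {Γ S : Finset α} (T : Finset α) (m : ℕ)
    (hS : S ⊆ Γ) :
    #{w ∈ coveringWords Γ T (m + 1) | w 0 ∈ S} =
      ∑ c ∈ S, #(coveringWords Γ (T.erase c) m) := by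
  rw [card_eq_sum_card_fiberwise (s := {w ∈ coveringWords Γ T (m + 1) | w 0 ∈ S}) (t := S)
    (f := fun w => w 0) fun w hw => (mem_filter.mp hw).2]
  refine sum_congr rfl fun c hc => ?_
  rw [filter_filter, ← card_filter_coveringWords_head_eq T m (hS hc)]
  congr 1
  exact filter_congr fun w _ => ⟨fun h => h.2, fun h => ⟨h ▸ hc, h⟩⟩

theorem card_coveringWords_succ {Γ T : Finset α} (m : ℕ) (hT : T ⊆ Γ) :
    #(coveringWords Γ T (m + 1)) =
      (#Γ - #T) * #(coveringWords Γ T m) + ∑ c ∈ T, #(coveringWords Γ (T.erase c) m) := by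
  have hhead : #(coveringWords Γ T (m + 1)) = ∑ c ∈ Γ, #(coveringWords Γ (T.erase c) m) := by
    rw [← card_filter_coveringWords_head_mem T m subset_rfl, filter_true_of_mem]
    exact fun w hw => (mem_filter.mp hw).2.1 0
  rw [hhead, ← sum_sdiff hT, ← card_sdiff_of_subset hT, ← smul_eq_mul, ← sum_const]
  congr 1
  exact sum_congr rfl fun c hc => by rw [erase_eq_of_notMem (mem_sdiff.mp hc).2]

theorem card_coveringWords {Γ T : Finset α} (m : ℕ) (hTΓ : T ⊆ Γ) (hTm : #T ≤ m) :
    #(coveringWords Γ T m) =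
      (#T).factorial * completeHomogeneous (fun i => #Γ - i) (#T + 1) (m - #T) := by
  induction m generalizing T with
  | zero =>
    obtain rfl : T = ∅ := card_eq_zero.mp (Nat.le_zero.mp hTm)
    simp [coveringWords, completeHomogeneous_zero_right]
  | succ m ih =>
    set f : ℕ → ℕ := fun i => #Γ - i
    have hsum : ∑ c ∈ T, #(coveringWords Γ (T.erase c) m) =
        (#T).factorial * completeHomogeneous f #T (m + 1 - #T) := by
      rcases T.eq_empty_or_nonempty with rfl | ⟨t, ht⟩
      · simp [completeHomogeneous_zero_succ]
      · obtain ⟨s, hs⟩ : ∃ s, #T = s + 1 := ⟨#T - 1, by have := card_pos.mpr ⟨t, ht⟩; omega⟩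
        have hc (c) (hc : c ∈ T) : #(coveringWords Γ (T.erase c) m) =
            s.factorial * completeHomogeneous f (s + 1) (m - s) := by
          rw [ih ((erase_subset c T).trans hTΓ) (by rw [card_erase_of_mem hc]; omega),
            card_erase_of_mem hc, hs, Nat.add_sub_cancel]
        rw [sum_congr rfl hc, sum_const, smul_eq_mul, hs, ← mul_assoc, ← Nat.factorial_succ,
          Nat.add_sub_add_right]
    rw [card_coveringWords_succ m hTΓ, hsum]
    rcases Nat.lt_or_ge m #T with hmT | hTm'
    · rw [card_coveringWords_of_lt hmT, show m + 1 - #T = 0 by omega]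
      simp [completeHomogeneous_zero_right]
    · rw [ih hTΓ hTm', Nat.sub_add_comm hTm', completeHomogeneous_succ_succ]
      ring

end CoveringWords

theorem runOf_eq_of_forall_lt {n r : ℕ} {a : Fin n → Fin n}
    (hlt : ∀ j < r, ∃ x, (a x : ℕ) = j) (hr : ∀ x, (a x : ℕ) ≠ r) : runOf a = r := by
  have hrn : ∀ j < r, j < n := fun j hj => by
    obtain ⟨x, hx⟩ := hlt j hj
    exact hx ▸ (a x).isLt
  unfold runOf
  convert card_range r using 2
  ext i
  simp only [mem_filter, mem_range]
  refine ⟨fun ⟨_, hi⟩ => ?_, fun hi => ⟨hrn i hi, fun j hj => hlt j (by omega)⟩⟩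
  by_contra! hri
  obtain ⟨x, hx⟩ := hi r hri
  exact hr x hx

theorem runOf_eq_iff {n r : ℕ} (a : Fin n → Fin n) :
    runOf a = r ↔ (∀ j < r, ∃ x, (a x : ℕ) = j) ∧ ∀ x, (a x : ℕ) ≠ r := by
  have hmissing : ∃ j, ∀ x, (a x : ℕ) ≠ j := ⟨n, fun x => (a x).isLt.ne⟩
  have hmex : ∀ j < Nat.find hmissing, ∃ x, (a x : ℕ) = j := fun j hj => by
    simpa using Nat.find_min hmissing hj
  rw [runOf_eq_of_forall_lt hmex (Nat.find_spec hmissing)]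
  refine ⟨fun h => h ▸ ⟨hmex, Nat.find_spec hmissing⟩, fun ⟨hlt, hr⟩ => ?_⟩
  refine le_antisymm (Nat.find_min' hmissing hr) (not_lt.mp fun h => ?_)
  obtain ⟨x, hx⟩ := hlt _ h
  exact Nat.find_spec hmissing x hx

theorem isRookWord_and_runOf_eq_iff {m r : ℕ} (hr : r ≤ m + 1) (a : Fin (m + 1) → Fin (m + 1)) :
    IsRookWord a ∧ runOf a = r ↔
      a ∈ coveringWords {c : Fin (m + 1) | (c : ℕ) ≠ r} {c | (c : ℕ) < r} (m + 1) ∧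
        (a 0 : ℕ) < r := by
  rw [and_congr_left fun hrun => by rw [IsRookWord, hrun], runOf_eq_iff]
  simp only [coveringWords, mem_filter, mem_univ, true_and, Fin.forall_iff, Fin.ext_iff]
  exact ⟨fun ⟨⟨_, h0⟩, hlt, hne⟩ => ⟨⟨hne, fun i _ hi => hlt i hi⟩, by simpa using h0⟩,
    fun ⟨⟨hne, hlt⟩, h0⟩ =>
      ⟨⟨m.succ_pos, by simpa using h0⟩, fun j hj => hlt j (by omega) hj, hne⟩⟩

theorem rw_run_count_compositions (n r : ℕ) (hr : 1 ≤ r) (hrn : r ≤ n) :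
    Nat.card {a : Fin n → Fin n // IsRookWord a ∧ runOf a = r} =
    r.factorial * ∑ e ∈ Finset.Nat.antidiagonalTuple r (n - r),
      ∏ i : Fin r, (n - 1 - (i : ℕ)) ^ e i := by
  obtain ⟨m, rfl⟩ : ∃ m, n = m + 1 := ⟨n - 1, by omega⟩
  set Γ : Finset (Fin (m + 1)) := {c | (c : ℕ) ≠ r}
  set T : Finset (Fin (m + 1)) := {c | (c : ℕ) < r}
  have hT : #T = r := by rw [Fin.card_filter_val_lt]; omega
  have hTΓ : T ⊆ Γ := fun c hc => mem_filter.mpr ⟨mem_univ c, (mem_filter.mp hc).2.ne⟩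
  have hΓ : completeHomogeneous (fun i => #Γ - i) r (m + 1 - r) =
      completeHomogeneous (fun i => m + 1 - 1 - i) r (m + 1 - r) := by
    rcases Nat.lt_or_ge r (m + 1) with hrm | hrm
    · have : Γ = univ.erase ⟨r, hrm⟩ := by ext c; simp [Γ, Fin.ext_iff]
      simp [this]
    · simp [show m + 1 - r = 0 by omega, completeHomogeneous_zero_right]
  calc Nat.card {a : Fin (m + 1) → Fin (m + 1) // IsRookWord a ∧ runOf a = r}
      = #{w ∈ coveringWords Γ T (m + 1) | w 0 ∈ T} := by
        rw [Nat.card_eq_fintype_card, Fintype.card_subtype]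
        congr 1
        ext a
        simp [isRookWord_and_runOf_eq_iff hrn, Γ, T]
    _ = ∑ c ∈ T, #(coveringWords Γ (T.erase c) m) := card_filter_coveringWords_head_mem T m hTΓ
    _ = ∑ c ∈ T, (r - 1).factorial * completeHomogeneous (fun i => #Γ - i) r (m + 1 - r) := by
        refine sum_congr rfl fun c hc => ?_
        rw [card_coveringWords m ((erase_subset c T).trans hTΓ)
          (by rw [card_erase_of_mem hc]; omega), card_erase_of_mem hc, hT,
          Nat.sub_add_cancel hr]
        congr 2
        omega
    _ = _ := by
        rw [sum_const, hT, smul_eq_mul, ← mul_assoc, Nat.mul_factorial_pred (by omega), hΓ]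
        rfl
end
end

section
/- Let n ≥ 1. There exists a bijection Φ from {1,…,n}^n onto itself such that: (i) for every a ∈ {1,…,n}^n, the set Run(Φ(a)) is centered for a and every set centered for a has cardinality at most |Run(Φ(a))| (in particular run(Φ(a)) = z(a)); and (ii) Φ maps the set of parking functions of length n onto itself. -/
open Finset

noncomputable section
open scoped Classical

/-!
`Φ` is the inverse of an explicit injective map `b ↦ centerWord b` of the finite set of words.
With `R = Run(b)` and `r = run(b)`, `centerWord b` is designed so that `R` is exactly the set
picked by the greedy left-to-right construction of a centered set (take `p` iff its letter does
not exceed the number of positions already taken), and a greedy set is a centered set of maximum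
size; hence `z(centerWord b) = |R| = r`.

On `R`, `centerWord b` records the inversion table of `b|R` (the number of earlier positions of
`R` with a smaller letter); as `b` maps `R` bijectively onto `{0, …, r - 1}`, this recovers `b`
on `R`. Off `R` the new letter is a strictly increasing function of `b p`, equal to `b p` when
`b p > r`. So `centerWord b` determines `R` (greedy sets are unique), then `r`, then `b` on `R`,
then `b` everywhere. Both `b` and `centerWord b` satisfy the parking inequalities at all levels
`i < r` thanks to `R`, and at levels `i ≥ r` they have the same letters `≤ i`.
-/

section Greedy

variable {α : Type*} [LinearOrder α]

lemma card_filter_le_eq_card_filter_lt_add (S : Finset α) (p : α) :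
    #(S.filter (· ≤ p)) = #(S.filter (· < p)) + if p ∈ S then 1 else 0 := by
  split_ifs with hp
  · rw [← card_insert_of_notMem (a := p) (s := S.filter (· < p)) (by simp)]
    congr 1
    ext y
    simp only [mem_insert, mem_filter, le_iff_lt_or_eq]
    grind
  · congr 1
    ext y
    simp only [mem_filter, le_iff_lt_or_eq]
    grind

/-- `S` is the centered set built greedily from left to right: `p` is taken iff
`a p` does not exceed the number of positions taken before it. -/
def IsGreedyCentered (a : α → ℕ) (S : Finset α) : Prop :=
  ∀ p, p ∈ S ↔ a p ≤ #(S.filter (· < p))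

variable {a : α → ℕ} {S : Finset α}

lemma IsGreedyCentered.centered (hS : IsGreedyCentered a S) :
    ∀ x ∈ S, a x + 1 ≤ #(S.filter (· ≤ x)) := by
  intro x hx
  rw [card_filter_le_eq_card_filter_lt_add, if_pos hx]
  exact Nat.add_le_add_right ((hS x).1 hx) 1

lemma IsGreedyCentered.unique [WellFoundedLT α] {S' : Finset α} (hS : IsGreedyCentered a S)
    (hS' : IsGreedyCentered a S') : S = S' := by
  ext p
  induction p using WellFoundedLT.induction with
  | ind p ih =>
    have hbelow : S.filter (· < p) = S'.filter (· < p) := by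
      ext q
      simp only [mem_filter, and_congr_left_iff]
      exact ih q
    rw [hS p, hS' p, hbelow]

lemma IsGreedyCentered.card_filter_le_le [WellFoundedLT α] (hS : IsGreedyCentered a S)
    {X : Finset α} (hX : ∀ x ∈ X, a x + 1 ≤ #(X.filter (· ≤ x))) (p : α) :
    #(X.filter (· ≤ p)) ≤ #(S.filter (· ≤ p)) := by
  induction p using WellFoundedLT.induction with
  | ind p ih =>
    have hlt : #(X.filter (· < p)) ≤ #(S.filter (· < p)) := by
      rcases (X.filter (· < p)).eq_empty_or_nonempty with hempty | hne
      · simp [hempty]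
      have hq := mem_filter.1 ((X.filter (· < p)).max'_mem hne)
      set q := (X.filter (· < p)).max' hne
      calc #(X.filter (· < p)) = #(X.filter (· ≤ q)) := by
            congr 1
            ext y
            simp only [mem_filter, and_congr_right_iff]
            exact fun hy => ⟨fun hyp => le_max' _ _ (mem_filter.2 ⟨hy, hyp⟩),
              fun hyq => hyq.trans_lt hq.2⟩
        _ ≤ #(S.filter (· ≤ q)) := ih q hq.2
        _ ≤ #(S.filter (· < p)) :=
            card_le_card fun y => by
              simp only [mem_filter]
              exact fun hy => ⟨hy.1, hy.2.trans_lt hq.2⟩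
    rw [card_filter_le_eq_card_filter_lt_add, card_filter_le_eq_card_filter_lt_add]
    by_cases hpX : p ∈ X
    · have hpS : p ∈ S := by
        have := hX p hpX
        rw [card_filter_le_eq_card_filter_lt_add, if_pos hpX] at this
        exact (hS p).2 (by omega)
      simp only [if_pos hpX, if_pos hpS]
      omega
    · simp only [if_neg hpX]
      omega

lemma IsGreedyCentered.card_le [WellFoundedLT α] (hS : IsGreedyCentered a S)
    {X : Finset α} (hX : ∀ x ∈ X, a x + 1 ≤ #(X.filter (· ≤ x))) : #X ≤ #S := by
  rcases X.eq_empty_or_nonempty with rfl | hne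
  · simp
  calc #X = #(X.filter (· ≤ X.max' hne)) := by
        rw [filter_true_of_mem fun y hy => le_max' X y hy]
    _ ≤ #(S.filter (· ≤ X.max' hne)) := hS.card_filter_le_le hX _
    _ ≤ #S := card_filter_le _ _

end Greedy

section Inversions

variable {α β : Type*} [LinearOrder α] [LinearOrder β]

lemma strictMonoOn_card_filter_lt (V : Finset β) :
    StrictMonoOn (fun s => #(V.filter (· < s))) V := by
  intro s hs t _ hst
  refine card_lt_card ⟨fun y hy => ?_, fun hsub => ?_⟩
  · simp only [mem_filter] at hy ⊢
    exact ⟨hy.1, hy.2.trans hst⟩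
  · exact lt_irrefl s (mem_filter.1 (hsub (mem_filter.2 ⟨hs, hst⟩))).2

variable {R : Finset α} {f g : α → β}

lemma card_filter_lt_and_lt_eq (hf : Set.InjOn f R) {p : α} :
    #(R.filter (fun y => y < p ∧ f y < f p)) =
      #(((R.filter (· ≤ p)).image f).filter (· < f p)) := by
  rw [filter_image, card_image_of_injOn (hf.mono fun y hy => (mem_filter.1 (mem_filter.1 hy).1).1)]
  congr 1
  ext y
  simp only [mem_filter]
  exact ⟨fun ⟨hy, hyp, hfy⟩ => ⟨⟨hy, hyp.le⟩, hfy⟩, fun ⟨⟨hy, hyp⟩, hfy⟩ =>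
    ⟨hy, hyp.lt_of_ne (by rintro rfl; exact lt_irrefl _ hfy), hfy⟩⟩

lemma image_filter_le_eq_sdiff (hf : Set.InjOn f R) (p : α) :
    (R.filter (· ≤ p)).image f = R.image f \ (R.filter (p < ·)).image f := by
  rw [← image_sdiff_of_injOn hf (filter_subset _ _), ← filter_not]
  simp only [not_lt]

lemma eqOn_of_image_eq_of_inversions_eq [WellFoundedGT α] (hf : Set.InjOn f R)
    (hg : Set.InjOn g R) (himg : R.image f = R.image g)
    (hinv : ∀ p ∈ R, #(R.filter (fun y => y < p ∧ f y < f p)) =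
      #(R.filter (fun y => y < p ∧ g y < g p))) :
    Set.EqOn f g R := by
  intro p
  induction p using WellFoundedGT.induction with
  | ind p ih =>
    intro hp
    have himage : (R.filter (· ≤ p)).image f = (R.filter (· ≤ p)).image g := by
      rw [image_filter_le_eq_sdiff hf, image_filter_le_eq_sdiff hg, himg,
        image_congr fun y hy => ih y (mem_filter.1 hy).2 (mem_filter.1 hy).1]
    have hpf : f p ∈ (R.filter (· ≤ p)).image f :=
      mem_image_of_mem f (mem_filter.2 ⟨hp, le_rfl⟩)
    have hpg : g p ∈ (R.filter (· ≤ p)).image f :=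
      himage ▸ mem_image_of_mem g (mem_filter.2 ⟨hp, le_rfl⟩)
    refine (strictMonoOn_card_filter_lt _).injOn hpf hpg ?_
    rw [← card_filter_lt_and_lt_eq hf, hinv p hp, card_filter_lt_and_lt_eq hg, himage]

end Inversions

lemma strictMonoOn_card_filter_or_le_add_tsub {α : Type*} [LinearOrder α] (R : Finset α)
    (f : α → ℕ) (p : α) (r : ℕ) :
    StrictMonoOn (fun u => #(R.filter (fun y => y < p ∨ f y ≤ u)) + (u - r))
      {u | u ≠ r ∧ (u < r → ∃ y ∈ R, p < y ∧ f y = u)} := by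
  intro s _ t ⟨htr, hocc⟩ hst
  have hsub : R.filter (fun y => y < p ∨ f y ≤ s) ⊆ R.filter (fun y => y < p ∨ f y ≤ t) :=
    fun y hy => by
      simp only [mem_filter] at hy ⊢
      exact ⟨hy.1, hy.2.imp_right fun h => h.trans hst.le⟩
  simp only
  rcases htr.lt_or_gt with htr | htr
  · obtain ⟨y, hy, hpy, hfy⟩ := hocc htr
    have : #(R.filter (fun y => y < p ∨ f y ≤ s)) <
        #(R.filter (fun y => y < p ∨ f y ≤ t)) := by
      refine card_lt_card ⟨hsub, fun hsub' => ?_⟩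
      rcases (mem_filter.1 (hsub' (mem_filter.2 ⟨hy, Or.inr hfy.le⟩))).2 with hyp | hys
      · exact hpy.not_gt hyp
      · omega
    omega
  · have := card_le_card hsub
    omega

section Run

variable {n : ℕ} {b : Fin n → Fin n}

lemma lt_runOf_iff {k : ℕ} : k < runOf b ↔ ∀ j ≤ k, ∃ x, (b x : ℕ) = j := by
  set F := (range n).filter (fun i => ∀ j ≤ i, ∃ x : Fin n, (b x : ℕ) = j)
  have hrun : runOf b = #F := rfl
  constructor
  · intro hk
    by_contra hnot
    have hsub : F ⊆ range k := fun i hi => by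
      simp only [F, mem_filter, mem_range] at hi ⊢
      by_contra hik
      exact hnot fun j hj => hi.2 j (by omega)
    have := card_le_card hsub
    rw [card_range] at this
    omega
  · intro hk
    have hsub : range (k + 1) ⊆ F := fun i hi => by
      simp only [F, mem_filter, mem_range] at hi ⊢
      obtain ⟨x, hx⟩ := hk i (by omega)
      exact ⟨hx ▸ (b x).2, fun j hj => hk j (by omega)⟩
    have := card_le_card hsub
    rw [card_range] at this
    omega

lemma val_ne_runOf (x : Fin n) : (b x : ℕ) ≠ runOf b := fun h =>
  lt_irrefl _ <| lt_runOf_iff.2 fun j hj =>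
    hj.lt_or_eq.elim (fun hj => lt_runOf_iff.1 hj j le_rfl) fun hj => ⟨x, h.trans hj.symm⟩

lemma mem_RunSet {y : Fin n} :
    y ∈ RunSet b ↔ (b y : ℕ) < runOf b ∧ ∀ j', y < j' → b j' ≠ b y := by
  simp [RunSet]

lemma injOn_RunSet : Set.InjOn (fun y => (b y : ℕ)) (RunSet b) := by
  intro y hy y' hy' h
  have h' : b y = b y' := Fin.ext h
  rcases lt_trichotomy y y' with hlt | heq | hgt
  · exact absurd h'.symm ((mem_RunSet.1 hy).2 y' hlt)
  · exact heq
  · exact absurd h' ((mem_RunSet.1 hy').2 y hgt)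

lemma exists_mem_RunSet_le {x : Fin n} (hx : (b x : ℕ) < runOf b) :
    ∃ y ∈ RunSet b, x ≤ y ∧ b y = b x := by
  set S := univ.filter (fun z => b z = b x)
  have hne : S.Nonempty := ⟨x, by simp [S]⟩
  have hmax := (mem_filter.1 (S.max'_mem hne)).2
  refine ⟨S.max' hne, mem_RunSet.2 ⟨by rw [hmax]; exact hx, fun j hj hbj => ?_⟩,
    S.le_max' x (by simp [S]), hmax⟩
  exact hj.not_ge (S.le_max' j (by simp [S, hbj, hmax]))

lemma exists_mem_RunSet_gt {p : Fin n} (hp : p ∉ RunSet b) (h : (b p : ℕ) < runOf b) :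
    ∃ y ∈ RunSet b, p < y ∧ (b y : ℕ) = b p := by
  obtain ⟨y, hy, hpy, hyp⟩ := exists_mem_RunSet_le h
  exact ⟨y, hy, hpy.lt_of_ne (by rintro rfl; exact hp hy), by rw [hyp]⟩

lemma image_RunSet : (RunSet b).image (fun y => (b y : ℕ)) = range (runOf b) := by
  ext u
  simp only [mem_image, mem_range]
  constructor
  · rintro ⟨y, hy, rfl⟩
    exact (mem_RunSet.1 hy).1
  · intro hu
    obtain ⟨x, rfl⟩ := lt_runOf_iff.1 hu u le_rfl
    obtain ⟨y, hy, -, hyx⟩ := exists_mem_RunSet_le hu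
    exact ⟨y, hy, by rw [hyx]⟩

lemma card_RunSet : #(RunSet b) = runOf b := by
  rw [← card_image_of_injOn injOn_RunSet, image_RunSet, card_range]

lemma card_filter_RunSet_lt {u : ℕ} (hu : u ≤ runOf b) :
    #((RunSet b).filter (fun y => (b y : ℕ) < u)) = u := by
  rw [← card_image_of_injOn (injOn_RunSet.mono (filter_subset _ _)),
    ← filter_image (p := (· < u)), image_RunSet]
  convert card_range u using 2
  ext v
  simp only [mem_filter, mem_range]
  omega

lemma runOf_lt_of_notMem_RunSet {p : Fin n} (hp : p ∉ RunSet b) : runOf b < n := by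
  simpa [card_RunSet] using card_lt_univ_of_notMem hp

end Run

section CenterWord

variable {n : ℕ} {b b' : Fin n → Fin n} {p : Fin n}

/-- The truncated difference `b p - runOf b` vanishes when `b p < run(b)`. -/
def centerWordVal (b : Fin n → Fin n) (p : Fin n) : ℕ :=
  if p ∈ RunSet b then #((RunSet b).filter (fun y => y < p ∧ (b y : ℕ) < b p))
  else #((RunSet b).filter (fun y => y < p ∨ (b y : ℕ) ≤ b p)) + ((b p : ℕ) - runOf b)

lemma centerWordVal_lt (b : Fin n → Fin n) (p : Fin n) : centerWordVal b p < n := by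
  unfold centerWordVal
  split_ifs with hp
  · calc _ < #(RunSet b) :=
          card_lt_card ⟨filter_subset _ _, fun h => lt_irrefl p (mem_filter.1 (h hp)).2.1⟩
      _ ≤ n := by simpa using card_le_univ (RunSet b)
  · have hcard : #((RunSet b).filter (fun y => y < p ∨ (b y : ℕ) ≤ b p)) ≤ runOf b :=
      card_RunSet (b := b) ▸ card_filter_le _ _
    have := runOf_lt_of_notMem_RunSet hp
    have := (b p).2
    omega

def centerWord (b : Fin n → Fin n) : Fin n → Fin n :=
  fun p => ⟨centerWordVal b p, centerWordVal_lt b p⟩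

lemma centerWord_of_mem (hp : p ∈ RunSet b) :
    (centerWord b p : ℕ) = #((RunSet b).filter (fun y => y < p ∧ (b y : ℕ) < b p)) :=
  if_pos hp

lemma centerWord_of_notMem (hp : p ∉ RunSet b) :
    (centerWord b p : ℕ) =
      #((RunSet b).filter (fun y => y < p ∨ (b y : ℕ) ≤ b p)) + ((b p : ℕ) - runOf b) :=
  if_neg hp

lemma centerWord_of_runOf_lt (h : runOf b < b p) : centerWord b p = b p := by
  have hp : p ∉ RunSet b := fun hp => (mem_RunSet.1 hp).1.not_gt h
  refine Fin.ext ?_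
  rw [centerWord_of_notMem hp,
    filter_true_of_mem fun y hy => Or.inr ((mem_RunSet.1 hy).1.trans h).le, card_RunSet]
  omega

lemma centerWord_le_of_mem (hp : p ∈ RunSet b) : centerWord b p ≤ b p := by
  rw [Fin.le_def, centerWord_of_mem hp]
  calc _ ≤ #((RunSet b).filter (fun y => (b y : ℕ) < b p)) := card_le_card fun y hy => by
          simp only [mem_filter] at hy ⊢
          exact ⟨hy.1, hy.2.2⟩
    _ = b p := card_filter_RunSet_lt (mem_RunSet.1 hp).1.le

lemma isGreedyCentered_centerWord :
    IsGreedyCentered (fun p => (centerWord b p : ℕ)) (RunSet b) := by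
  intro p
  have hsub :
      (RunSet b).filter (· < p) ⊆ (RunSet b).filter (fun y => y < p ∨ (b y : ℕ) ≤ b p) :=
    fun y hy => by
      simp only [mem_filter] at hy ⊢
      exact ⟨hy.1, Or.inl hy.2⟩
  by_cases hp : p ∈ RunSet b
  · simp only [hp, true_iff, centerWord_of_mem hp]
    exact card_le_card fun y hy => by
      simp only [mem_filter] at hy ⊢
      exact ⟨hy.1, hy.2.1⟩
  simp only [hp, false_iff, not_le, centerWord_of_notMem hp]
  rcases (val_ne_runOf (b := b) p).lt_or_gt with hlt | hgt
  · obtain ⟨y, hy, hpy, hyp⟩ := exists_mem_RunSet_gt hp hlt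
    have : #((RunSet b).filter (· < p)) <
        #((RunSet b).filter (fun y => y < p ∨ (b y : ℕ) ≤ b p)) :=
      card_lt_card ⟨hsub, fun h =>
        hpy.not_gt (mem_filter.1 (h (mem_filter.2 ⟨hy, Or.inr hyp.le⟩))).2⟩
    omega
  · have := card_le_card hsub
    omega

lemma centered_centerWord : Centered (centerWord b) (RunSet b) :=
  isGreedyCentered_centerWord.centered

lemma card_le_of_centered_centerWord {X : Finset (Fin n)} (hX : Centered (centerWord b) X) :
    #X ≤ runOf b :=
  card_RunSet (b := b) ▸ isGreedyCentered_centerWord.card_le hX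

lemma zOf_centerWord : zOf (centerWord b) = runOf b :=
  IsGreatest.csSup_eq ⟨⟨RunSet b, centered_centerWord, card_RunSet⟩,
    by rintro _ ⟨X, hX, rfl⟩; exact card_le_of_centered_centerWord hX⟩

lemma card_filter_le_of_lt_runOf {w : Fin n → Fin n} (hw : ∀ p ∈ RunSet b, w p ≤ b p)
    {i : Fin n} (hi : (i : ℕ) < runOf b) :
    (i : ℕ) + 1 ≤ #(univ.filter (fun j => w j ≤ i)) :=
  calc (i : ℕ) + 1 = #((RunSet b).filter (fun y => (b y : ℕ) < i + 1)) :=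
        (card_filter_RunSet_lt hi).symm
    _ ≤ #(univ.filter (fun j => w j ≤ i)) := card_le_card fun y hy => by
        simp only [mem_filter, mem_univ, true_and] at hy ⊢
        exact (hw y hy.1).trans (Fin.le_def.2 (Nat.lt_succ_iff.1 hy.2))

lemma centerWord_le_iff_of_runOf_le {v : ℕ} (hv : runOf b ≤ v) (p : Fin n) :
    (centerWord b p : ℕ) ≤ v ↔ (b p : ℕ) ≤ v := by
  rcases (val_ne_runOf (b := b) p).lt_or_gt with hlt | hgt
  · have : (centerWord b p : ℕ) ≤ runOf b := by
      by_cases hp : p ∈ RunSet b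
      · exact (Fin.le_def.1 (centerWord_le_of_mem hp)).trans hlt.le
      · rw [centerWord_of_notMem hp, Nat.sub_eq_zero_of_le hlt.le, add_zero, ← card_RunSet]
        exact card_filter_le _ _
    omega
  · rw [centerWord_of_runOf_lt hgt]

lemma isParkingFunction_centerWord_iff :
    IsParkingFunction (centerWord b) ↔ IsParkingFunction b := by
  refine forall_congr' fun i => ?_
  by_cases hi : (i : ℕ) < runOf b
  · exact iff_of_true (card_filter_le_of_lt_runOf (fun _ => centerWord_le_of_mem) hi)
      (card_filter_le_of_lt_runOf (fun _ _ => le_rfl) hi)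
  · have hfilter :
        univ.filter (fun j => centerWord b j ≤ i) = univ.filter (fun j => b j ≤ i) :=
      filter_congr fun j _ => by
        simpa only [Fin.le_def] using centerWord_le_iff_of_runOf_le (not_lt.1 hi) j
    rw [hfilter]

lemma RunSet_eq_of_centerWord_eq (h : centerWord b = centerWord b') : RunSet b = RunSet b' :=
  isGreedyCentered_centerWord.unique (by rw [h]; exact isGreedyCentered_centerWord)

lemma runOf_eq_of_centerWord_eq (h : centerWord b = centerWord b') : runOf b = runOf b' := by
  rw [← zOf_centerWord, h, zOf_centerWord]

lemma eqOn_RunSet_of_centerWord_eq (h : centerWord b = centerWord b') :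
    Set.EqOn b b' (RunSet b) := by
  have hR := RunSet_eq_of_centerWord_eq h
  have hinj' : Set.InjOn (fun y => (b' y : ℕ)) (RunSet b) := hR ▸ injOn_RunSet
  intro p hp
  refine Fin.ext (eqOn_of_image_eq_of_inversions_eq injOn_RunSet hinj' ?_ (fun q hq => ?_) hp)
  · rw [image_RunSet, hR, image_RunSet, runOf_eq_of_centerWord_eq h]
  · have := congrArg Fin.val (congrFun h q)
    rwa [centerWord_of_mem hq, centerWord_of_mem (hR ▸ hq), ← hR] at this

lemma eq_of_notMem_RunSet_of_centerWord_eq (h : centerWord b = centerWord b')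
    (hp : p ∉ RunSet b) : b p = b' p := by
  have hR := RunSet_eq_of_centerWord_eq h
  have hr := runOf_eq_of_centerWord_eq h
  have hon := eqOn_RunSet_of_centerWord_eq h
  have hp' : p ∉ RunSet b' := hR ▸ hp
  have hfilter : (RunSet b).filter (fun y => y < p ∨ (b' y : ℕ) ≤ b' p) =
      (RunSet b).filter (fun y => y < p ∨ (b y : ℕ) ≤ b' p) :=
    filter_congr fun y hy => by rw [hon hy]
  have hval := congrArg Fin.val (congrFun h p)
  rw [centerWord_of_notMem hp, centerWord_of_notMem hp', ← hR, ← hr, hfilter] at hval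
  refine Fin.ext ((strictMonoOn_card_filter_or_le_add_tsub (RunSet b) (fun y => (b y : ℕ)) p
    (runOf b)).injOn ⟨val_ne_runOf p, exists_mem_RunSet_gt hp⟩
    ⟨hr ▸ val_ne_runOf p, fun hlt => ?_⟩ hval)
  obtain ⟨y, hy, hpy, hyp⟩ := exists_mem_RunSet_gt hp' (hr ▸ hlt)
  exact ⟨y, hR ▸ hy, hpy, by rw [← hyp, hon (hR ▸ hy)]⟩

lemma centerWord_injective : Function.Injective (centerWord (n := n)) := fun b _ h =>
  funext fun p => if hp : p ∈ RunSet b then eqOn_RunSet_of_centerWord_eq h hp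
    else eq_of_notMem_RunSet_of_centerWord_eq h hp

def centerEquiv : (Fin n → Fin n) ≃ (Fin n → Fin n) :=
  Equiv.ofBijective centerWord (Finite.injective_iff_bijective.1 centerWord_injective)

end CenterWord

theorem exists_center_run_bijection_general (n : ℕ) :
    ∃ Φ : (Fin n → Fin n) ≃ (Fin n → Fin n),
      (∀ a : Fin n → Fin n,
        Centered a (RunSet (Φ a)) ∧
        (∀ X : Finset (Fin n), Centered a X → X.card ≤ (RunSet (Φ a)).card) ∧
        runOf (Φ a) = zOf a) ∧
      (∀ a : Fin n → Fin n, IsParkingFunction (Φ a) ↔ IsParkingFunction a) := by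
  refine ⟨centerEquiv.symm, fun a => ?_, fun a => ?_⟩ <;>
    obtain ⟨b, rfl⟩ := centerEquiv.surjective a <;>
    rw [Equiv.symm_apply_apply]
  · exact ⟨centered_centerWord,
      fun X hX => card_RunSet (b := b) ▸ card_le_of_centered_centerWord hX, zOf_centerWord.symm⟩
  · exact isParkingFunction_centerWord_iff.symm

theorem exists_center_run_bijection (n : ℕ) (hn : 1 ≤ n) :
    ∃ Φ : (Fin n → Fin n) ≃ (Fin n → Fin n),
      (∀ a : Fin n → Fin n,
        Centered a (RunSet (Φ a)) ∧
        (∀ X : Finset (Fin n), Centered a X → X.card ≤ (RunSet (Φ a)).card) ∧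
        runOf (Φ a) = zOf a) ∧
      (∀ a : Fin n → Fin n, IsParkingFunction (Φ a) ↔ IsParkingFunction a) :=
  exists_center_run_bijection_general n

end
end

section
/- Let k ≥ 2, let ℓ_1,…,ℓ_k be positive integers, and let i be an index with 1 ≤ i < k and ℓ_{i+1} > 1. Then N(ℓ_1,…,ℓ_{i−1}, ℓ_i + 1, ℓ_{i+1} − 1, ℓ_{i+2},…,ℓ_k) = N(ℓ_1,…,ℓ_k) + N(ℓ_1,…,ℓ_{i−1}) · N(ℓ_{i+1} − 1, ℓ_{i+2},…,ℓ_k). -/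
open Finset

noncomputable section
open scoped Classical

/-!
In slack coordinates `z_i = L_i - x_i` the conditions on `(x_0, …, x_m)` read `z_0 = 0` and
`0 ≤ z_i < z_{i-1} + ℓ_i`, so `N = N_0`, where `N_z(ℓ :: L) = ∑_{0 ≤ z' < z + ℓ} N_{z'}(L)`.
Replacing `(ℓ_i, ℓ_{i+1})` by `(ℓ_i + 1, ℓ_{i+1} - 1)` widens the range of `z_i` by the single
value `0`: the shift `z_i ↦ z_i + 1` keeps `z_i + ℓ_{i+1}`, hence all continuations, unchanged, and
the new value `z_i = 0` (that is, `x_i = L_i + 1`) contributes `N(ℓ_1, …, ℓ_{i-1})` prefixes,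
each continued in `N(ℓ_{i+1} - 1, ℓ_{i+2}, …, ℓ_k)` ways.
-/

def slackCount : ℤ → List ℤ → ℕ
  | _, [] => 1
  | z, ℓ :: L => ∑ z' ∈ Ico 0 (z + ℓ), slackCount z' L

@[simp]
theorem slackCount_nil (z : ℤ) : slackCount z [] = 1 := rfl

theorem slackCount_cons (z ℓ : ℤ) (L : List ℤ) :
    slackCount z (ℓ :: L) = ∑ z' ∈ Ico 0 (z + ℓ), slackCount z' L := rfl

theorem slackCount_cons_congr {z ℓ z' ℓ' : ℤ} (h : z + ℓ = z' + ℓ') (L : List ℤ) :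
    slackCount z (ℓ :: L) = slackCount z' (ℓ' :: L) := by
  rw [slackCount_cons, slackCount_cons, h]

theorem slackCount_succ_cons_pred (z a b : ℤ) (S : List ℤ) (h : 0 ≤ z + a) :
    slackCount z ((a + 1) :: (b - 1) :: S) =
      slackCount z (a :: b :: S) + slackCount 0 ((b - 1) :: S) := by
  rw [slackCount_cons, slackCount_cons, ← add_assoc,
    ← insert_Ico_add_one_left_eq_Ico (by omega), sum_insert (by simp), add_comm]
  congr 1
  rw [← zero_add (1 : ℤ), ← sum_Ico_add']
  exact sum_congr rfl fun w _ => slackCount_cons_congr (by ring) S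

theorem slackCount_append_succ_cons_pred (P S : List ℤ) (a b z : ℤ) (hz : 0 ≤ z) (ha : 0 ≤ a) :
    slackCount z (P ++ (a + 1) :: (b - 1) :: S) =
      slackCount z (P ++ a :: b :: S) + slackCount z P * slackCount 0 ((b - 1) :: S) := by
  induction P generalizing z with
  | nil => simpa using slackCount_succ_cons_pred z a b S (by omega)
  | cons ℓ P ih =>
    rw [List.cons_append, List.cons_append, slackCount_cons, slackCount_cons, slackCount_cons,
      sum_mul, ← sum_add_distrib]
    exact sum_congr rfl fun z' hz' => ih z' (mem_Ico.1 hz').1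

def IsNbrTuple (s c : ℤ) (L : List ℤ) (x : Fin (L.length + 1) → ℤ) : Prop :=
  x 0 = s ∧ ∀ i : Fin L.length, x i.castSucc < x i.succ ∧ x i.succ ≤ c + (L.take (i + 1)).sum

theorem isNbrTuple_cons_iff {s c ℓ : ℤ} {L : List ℤ} (x : Fin (L.length + 2) → ℤ) :
    IsNbrTuple s c (ℓ :: L) x ↔
      x 0 = s ∧ x 1 ∈ Ioc s (c + ℓ) ∧ IsNbrTuple (x 1) (c + ℓ) L (Fin.tail x) := by
  unfold IsNbrTuple
  simp only [List.length_cons, Fin.forall_fin_succ, mem_Ioc, Fin.tail, Fin.castSucc_zero,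
    Fin.succ_zero_eq_one, ← Fin.succ_castSucc, List.take_succ_cons, List.sum_cons, Fin.val_zero,
    Fin.val_succ, List.take_zero, List.sum_nil, add_zero, add_assoc, true_and]
  exact and_congr_right fun h => by rw [h]

instance (s c : ℤ) : Unique {x // IsNbrTuple s c [] x} where
  default := ⟨fun _ => s, rfl, fun i => i.elim0⟩
  uniq x := Subtype.ext <| funext fun i => by obtain rfl := Fin.fin_one_eq_zero i; exact x.2.1

def IsNbrTuple.consEquiv (s c ℓ : ℤ) (L : List ℤ) :
    {x // IsNbrTuple s c (ℓ :: L) x} ≃ Σ t : Ioc s (c + ℓ), {y // IsNbrTuple t (c + ℓ) L y} where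
  toFun x :=
    have hx := (isNbrTuple_cons_iff x.1).1 x.2
    ⟨⟨x.1 1, hx.2.1⟩, ⟨Fin.tail x.1, hx.2.2⟩⟩
  invFun p :=
    have hy0 : (Fin.cons s p.2.1 : Fin (L.length + 2) → ℤ) 1 = p.1 :=
      (Fin.cons_one (α := fun _ => ℤ) _ _).trans p.2.2.1
    ⟨Fin.cons s p.2.1, (isNbrTuple_cons_iff _).2 ⟨rfl, by rw [hy0]; exact p.1.2, by rw [hy0]; exact p.2.2⟩⟩
  left_inv x := Subtype.ext <| by
    calc Fin.cons s (Fin.tail x.1) = Fin.cons (x.1 0) (Fin.tail x.1) := by rw [x.2.1]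
      _ = x.1 := Fin.cons_self_tail x.1
  right_inv := by
    rintro ⟨⟨t, ht⟩, ⟨y, hy⟩⟩
    obtain rfl := hy.1
    exact Sigma.subtype_ext (Subtype.ext (Fin.cons_one (α := fun _ => ℤ) s y)) rfl

instance IsNbrTuple.finite (s c : ℤ) (L : List ℤ) : Finite {x // IsNbrTuple s c L x} := by
  induction L generalizing s c with
  | nil => infer_instance
  | cons ℓ L ih => exact Finite.of_equiv _ (IsNbrTuple.consEquiv s c ℓ L).symm

theorem IsNbrTuple.card_eq_slackCount (s c : ℤ) (L : List ℤ) :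
    Nat.card {x // IsNbrTuple s c L x} = slackCount (c - s) L := by
  induction L generalizing s c with
  | nil => simp
  | cons ℓ L ih =>
    rw [Nat.card_congr (IsNbrTuple.consEquiv s c ℓ L), Nat.card_sigma, slackCount_cons]
    simp only [ih]
    rw [sum_coe_sort (Ioc s (c + ℓ)) fun t => slackCount (c + ℓ - t) L]
    exact sum_nbij' (fun t => c + ℓ - t) (fun z => c + ℓ - z)
      (fun t ht => by simp only [mem_Ioc, mem_Ico] at ht ⊢; omega)
      (fun z hz => by simp only [mem_Ioc, mem_Ico] at hz ⊢; omega)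
      (fun t _ => sub_sub_cancel _ t) (fun z _ => sub_sub_cancel _ z) (fun _ _ => rfl)

theorem Nbr_eq_slackCount (L : List ℤ) : Nbr L = slackCount 0 L := by
  rw [← sub_zero (0 : ℤ), ← IsNbrTuple.card_eq_slackCount]
  simp only [Nbr, IsNbrTuple, zero_add]

theorem nbr_middle_recurrence_general (P S : List ℤ) (a b : ℤ) (ha : 0 < a) :
    Nbr (P ++ [a + 1, b - 1] ++ S) =
      Nbr (P ++ [a, b] ++ S) + Nbr P * Nbr ((b - 1) :: S) := by
  simp only [Nbr_eq_slackCount, List.append_assoc, List.cons_append, List.nil_append]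
  exact slackCount_append_succ_cons_pred P S a b 0 le_rfl ha.le

theorem nbr_middle_recurrence (P S : List ℤ) (a b : ℤ)
    (hP : ∀ x ∈ P, 0 < x) (hS : ∀ x ∈ S, 0 < x) (ha : 0 < a) (hb : 1 < b) :
    Nbr (P ++ [a + 1, b - 1] ++ S) =
      Nbr (P ++ [a, b] ++ S) + Nbr P * Nbr ((b - 1) :: S) :=
  nbr_middle_recurrence_general P S a b ha
end
end

section
/- Let k ≥ 2 and let ℓ_1,…,ℓ_k be positive integers with ℓ_1 > 1. Then N(ℓ_1 − 1, ℓ_2,…,ℓ_k) = N(ℓ_1,…,ℓ_k) − N(ℓ_1 + ℓ_2 − 1, ℓ_3,…,ℓ_k). -/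
open Finset

noncomputable section
open scoped Classical

/-!
Split the tuples of `⟨a, b, S⟩` according to whether `x_1 = 1`. Subtracting `1` from `x_1, …, x_m`
maps those with `x_1 > 1` bijectively onto `⟨a - 1, b, S⟩`. Those with `x_1 = 1` are determined by
`(0, x_2, …, x_m)`, which (as `a ≥ 1`) ranges over the tuples of `⟨a + b, S⟩` with first entry
`> 1`, and the same shift maps these onto `⟨a + b - 1, S⟩`.
-/

def nbrSet (L : List ℤ) : Set (Fin (L.length + 1) → ℤ) :=
  {x | x 0 = 0 ∧ ∀ i : Fin L.length,
    x i.castSucc < x i.succ ∧ x i.succ ≤ (L.take ((i : ℕ) + 1)).sum}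

theorem nbr_eq_ncard_nbrSet (L : List ℤ) : Nbr L = (nbrSet L).ncard := rfl

/-- `nbrTails a L` is `⟨a, L⟩` with the coordinate `x_0 = 0` dropped: `t j` stands for
`x_{j+1}`. -/
def nbrTails (a : ℤ) (L : List ℤ) : Set (Fin (L.length + 1) → ℤ) :=
  {t | 0 < t 0 ∧ t 0 ≤ a ∧
    ∀ j : Fin L.length, t j.castSucc < t j.succ ∧ t j.succ ≤ a + (L.take ((j : ℕ) + 1)).sum}

section nbrTails

variable {a b c : ℤ} {L : List ℤ}

theorem cons_mem_nbrSet_cons_iff {s : Fin (L.length + 1) → ℤ} :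
    (Fin.cons c s : Fin (L.length + 2) → ℤ) ∈ nbrSet (a :: L) ↔ c = 0 ∧ s ∈ nbrTails a L := by
  simp only [nbrSet, nbrTails, Set.mem_ofPred_eq, List.length_cons, Fin.forall_fin_succ,
    Fin.cons_zero, Fin.cons_succ, Fin.castSucc_zero, ← Fin.succ_castSucc, List.take_succ_cons,
    List.sum_cons, Fin.val_zero, Fin.val_succ, List.take_zero, List.sum_nil, add_zero]
  grind

theorem cons_mem_nbrTails_cons_iff {s : Fin (L.length + 1) → ℤ} :
    (Fin.cons c s : Fin (L.length + 2) → ℤ) ∈ nbrTails a (b :: L) ↔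
      0 < c ∧ c ≤ a ∧ c < s 0 ∧ s ∈ nbrTails (a + b) L := by
  simp only [nbrTails, Set.mem_ofPred_eq, List.length_cons, Fin.forall_fin_succ,
    Fin.cons_zero, Fin.cons_succ, Fin.castSucc_zero, ← Fin.succ_castSucc, List.take_succ_cons,
    List.sum_cons, Fin.val_zero, Fin.val_succ, List.take_zero, List.sum_nil, add_zero]
  grind

theorem finite_nbrTails : (nbrTails a L).Finite := by
  refine (Set.Finite.pi' fun j : Fin (L.length + 1) =>
    Set.finite_Icc 0 (a + (L.take j).sum)).subset ?_
  rintro t ⟨h0, ha, h⟩ j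
  refine ⟨?_, ?_⟩
  · induction j using Fin.induction with
    | zero => exact h0.le
    | succ j ih => exact ih.trans (h j).1.le
  · cases j using Fin.cases with
    | zero => simpa using ha
    | succ j => simpa using (h j).2

theorem nbr_cons_eq_ncard_nbrTails : Nbr (a :: L) = (nbrTails a L).ncard := by
  rw [nbr_eq_ncard_nbrSet,
    ← Set.ncard_image_of_injective (nbrTails a L) (Fin.cons_right_injective (α := fun _ => ℤ) 0)]
  congr 1
  ext x
  refine Fin.consCases (fun c s => ?_) x
  rw [cons_mem_nbrSet_cons_iff]
  simp [Fin.cons_inj, eq_comm, and_comm]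

theorem ncard_nbrTails_inter_one_lt :
    (nbrTails a L ∩ {t | 1 < t 0}).ncard = (nbrTails (a - 1) L).ncard :=
  Nat.card_congr <| (Equiv.subRight 1).subtypeEquiv fun t => by
    simp only [nbrTails, Set.mem_inter_iff, Set.mem_ofPred_eq, Equiv.subRight_apply, Pi.sub_apply,
      Pi.one_apply]
    grind

theorem ncard_nbrTails_cons_sdiff_one_lt (ha : 1 ≤ a) :
    (nbrTails a (b :: L) \ {t | 1 < t 0}).ncard = (nbrTails (a + b) L ∩ {s | 1 < s 0}).ncard := by
  rw [← Set.ncard_image_of_injective (nbrTails (a + b) L ∩ {s | 1 < s 0})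
    (Fin.cons_right_injective (α := fun _ => ℤ) 1)]
  congr 1
  ext t
  refine Fin.consCases (fun c s => ?_) t
  rw [Set.mem_sdiff, cons_mem_nbrTails_cons_iff]
  simp only [Set.mem_ofPred_eq, Fin.cons_zero, Set.mem_image, Set.mem_inter_iff, Fin.cons_inj,
    exists_eq_right_right]
  grind

end nbrTails

theorem nbr_first_recurrence_general (S : List ℤ) (a b : ℤ) (ha : 1 < a) :
    (Nbr ((a - 1) :: b :: S) : ℤ) =
      (Nbr (a :: b :: S) : ℤ) - (Nbr ((a + b - 1) :: S) : ℤ) := by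
  have hsplit := Set.ncard_inter_add_ncard_sdiff_eq_ncard (nbrTails a (b :: S)) {t | 1 < t 0}
    finite_nbrTails
  rw [ncard_nbrTails_inter_one_lt, ncard_nbrTails_cons_sdiff_one_lt ha.le,
    ncard_nbrTails_inter_one_lt] at hsplit
  rw [nbr_cons_eq_ncard_nbrTails, nbr_cons_eq_ncard_nbrTails, nbr_cons_eq_ncard_nbrTails, ← hsplit]
  push_cast
  ring

theorem nbr_first_recurrence (S : List ℤ) (a b : ℤ)
    (hS : ∀ x ∈ S, 0 < x) (ha : 1 < a) (hb : 0 < b) :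
    (Nbr ((a - 1) :: b :: S) : ℤ) =
      (Nbr (a :: b :: S) : ℤ) - (Nbr ((a + b - 1) :: S) : ℤ) :=
  nbr_first_recurrence_general S a b ha

end
end

section
/- Let n ≥ 1 and let 𝔄 = (A_1,…,A_k) be an ordered partition of {1,…,n} into k nonempty blocks. The number of parking functions of length n that are of type 𝔄 equals binom(n, k−1). -/
/-!
A word of type `𝔄` is constant on the blocks, so it is a map `g` from blocks to values which,
read from a suitable block onwards, is strictly increasing; the parking condition only sees the
block sizes `ℓ_j`, which sum to `n`. View the values in `ℤ/(n+1)`: translation preserves this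
cyclic monotonicity, and by the cycle lemma exactly one translate of any placement of the weights
`ℓ_j` on the cycle `ℤ/(n+1)` is parking, namely the one that starts the cycle just at the first
minimum of the excess `(weight below u) - u`. So parking words of type `𝔄` correspond to the
translation classes of such maps, represented by the strictly increasing `d` with `d 0 = 0`,
i.e. to `(k-1)`-subsets of `{1,…,n}`.
-/

open Finset

noncomputable section
open scoped Classical

def CyclicallyStrictMono {k : ℕ} {α : Type*} [Preorder α] (g : Fin k → α) : Prop :=
  ∃ s : Fin k, StrictMono fun j => g (j + s)

section Cyclic

theorem OrderEmbedding.cyclicallyStrictMono_comp_iff {k : ℕ} {α β : Type*} [Preorder α]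
    [Preorder β] (f : α ↪o β) {g : Fin k → α} :
    CyclicallyStrictMono (f ∘ g) ↔ CyclicallyStrictMono g :=
  exists_congr fun _ => ⟨fun h _ _ hij => f.lt_iff_lt.mp (h hij), f.strictMono.comp⟩

variable {k m : ℕ} [NeZero k]

theorem StrictMono.cyclicallyStrictMono_add_const {d : Fin k → Fin m} (hd : StrictMono d)
    (c : Fin m) : CyclicallyStrictMono fun j => d j + c := by
  -- `T` is the first index at which `d j + c` wraps around; rotating by `T` puts the wrapped
  -- values, which are all smaller than the others, first.
  have hex : ∃ T, ∀ j : Fin k, T ≤ (j : ℕ) → m ≤ (d j : ℕ) + c := ⟨k, fun j hj => by omega⟩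
  set T := Nat.find hex
  have hwrap : ∀ j : Fin k, m ≤ (d j : ℕ) + c ↔ T ≤ j := by
    refine fun j => ⟨fun hj => ?_, Nat.find_spec hex j⟩
    by_contra! hjT
    obtain ⟨j', hj'T, hj'⟩ : ∃ j' : Fin k, T - 1 ≤ j' ∧ (d j' : ℕ) + c < m := by
      simpa using Nat.find_min hex (show T - 1 < T by omega)
    have : d j ≤ d j' := hd.monotone (Fin.le_def.mpr (by omega))
    rw [Fin.le_def] at this
    omega
  have hTk : T ≤ k := Nat.find_min' hex fun j hj => by omega
  set t : Fin k := ⟨T % k, Nat.mod_lt _ (NeZero.pos k)⟩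
  have ht : (t : ℕ) = if T = k then 0 else T := by
    split_ifs with h
    · simp [t, h]
    · exact Nat.mod_eq_of_lt (by omega)
  refine ⟨t, fun i j hij => ?_⟩
  have hmono : ((i + t : Fin k) : ℕ) < (j + t : Fin k) → (d (i + t) : ℕ) < d (j + t) :=
    fun h => hd h
  have hi := hwrap (i + t)
  have hj := hwrap (j + t)
  have hit := Fin.val_add_eq_ite i t
  have hjt := Fin.val_add_eq_ite j t
  have hvi := Fin.val_add_eq_ite (d (i + t)) c
  have hvj := Fin.val_add_eq_ite (d (j + t)) c
  show d (i + t) + c < d (j + t) + c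
  rw [Fin.lt_def] at hij ⊢
  split_ifs at ht hit hjt hvi hvj <;> omega

theorem CyclicallyStrictMono.add_const {g : Fin k → Fin m} (hg : CyclicallyStrictMono g)
    (c : Fin m) : CyclicallyStrictMono fun j => g j + c := by
  obtain ⟨s, hs⟩ := hg
  obtain ⟨t, ht⟩ := hs.cyclicallyStrictMono_add_const c
  exact ⟨t + s, by simpa only [add_assoc] using ht⟩

theorem CyclicallyStrictMono.strictMono_of_apply_zero [NeZero m] {g : Fin k → Fin m}
    (hg : CyclicallyStrictMono g) (h0 : g 0 = 0) : StrictMono g := by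
  obtain ⟨s, hs⟩ := hg
  have : -s ≤ 0 := hs.le_iff_le.mp (by simp [h0])
  obtain rfl : s = 0 := neg_eq_zero.mp (le_antisymm this (Fin.zero_le _))
  simpa using hs

theorem CyclicallyStrictMono.strictMono_sub_apply_zero [NeZero m] {g : Fin k → Fin m}
    (hg : CyclicallyStrictMono g) : StrictMono fun j => g j - g 0 := by
  refine CyclicallyStrictMono.strictMono_of_apply_zero ?_ (sub_self _)
  simpa only [sub_eq_add_neg] using hg.add_const (-g 0)

end Cyclic

def IsFirstMinimizer {α : Type*} [LinearOrder α] (f : ℕ → α) (a b r : ℕ) : Prop :=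
  a ≤ r ∧ r ≤ b ∧ (∀ u, a ≤ u → u < r → f r < f u) ∧ (∀ u, r < u → u ≤ b → f r ≤ f u)

theorem existsUnique_isFirstMinimizer {α : Type*} [LinearOrder α] (f : ℕ → α) {a b : ℕ}
    (hab : a ≤ b) : ∃! r, IsFirstMinimizer f a b r := by
  have hex : ∃ r, (a ≤ r ∧ r ≤ b) ∧ ∀ u, a ≤ u → u ≤ b → f r ≤ f u := by
    obtain ⟨r, hr, hmin⟩ := exists_min_image (Icc a b) f ⟨a, by simp [hab]⟩
    exact ⟨r, mem_Icc.mp hr, fun u hau hub => hmin u (mem_Icc.mpr ⟨hau, hub⟩)⟩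
  obtain ⟨⟨har, hrb⟩, hmin⟩ := Nat.find_spec hex
  have hbefore : ∀ u, a ≤ u → u < Nat.find hex → f (Nat.find hex) < f u := by
    intro u hau hur
    obtain ⟨u', hau', hu'b, hlt⟩ : ∃ u', a ≤ u' ∧ u' ≤ b ∧ f u' < f u := by
      simpa [hau, hur.le.trans hrb] using Nat.find_min hex hur
    exact (hmin u' hau' hu'b).trans_lt hlt
  refine ⟨Nat.find hex, ⟨har, hrb, hbefore, fun u hru hub => hmin u (by omega) hub⟩, ?_⟩
  rintro r ⟨har', hrb', hbefore', hafter'⟩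
  rcases lt_trichotomy r (Nat.find hex) with h | h | h
  · exact absurd (hafter' _ h hrb) (not_le.mpr (hbefore r har' h))
  · exact h
  · exact absurd (hmin r har' hrb') (not_le.mpr (hbefore' _ har h))

section WeightedParking

variable {ι : Type*} [Fintype ι]

-- `ℓ j` cars all prefer the (0-based) spot `v j` of a one-way street with `n` spots.
def IsWeightedParking (ℓ v : ι → ℕ) (n : ℕ) : Prop :=
  ∀ i < n, i + 1 ≤ ∑ j ∈ univ.filter (fun j => v j ≤ i), ℓ j

variable {n : ℕ}

theorem IsWeightedParking.lt {ℓ v : ι → ℕ} (h : IsWeightedParking ℓ v n) (hℓ : ∀ j, 0 < ℓ j)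
    (hsum : ∑ j, ℓ j = n) (j : ι) : v j < n := by
  by_contra! hj
  have hn : 0 < n := hsum ▸ (hℓ j).trans_le (single_le_sum (fun _ _ => Nat.zero_le _) (mem_univ j))
  have hlt : ∑ j ∈ univ.filter (fun j => v j ≤ n - 1), ℓ j < ∑ j, ℓ j :=
    sum_lt_sum_of_subset (filter_subset _ _) (mem_univ j)
      (by simp only [mem_filter, mem_univ, true_and]; omega) (hℓ j) fun _ _ _ => Nat.zero_le _
  have := h (n - 1) (by omega)
  omega

def weightBelow (ℓ : ι → ℕ) (d : ι → Fin (n + 1)) (u : ℕ) : ℕ :=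
  ∑ j ∈ univ.filter (fun j => (d j : ℕ) < u), ℓ j

variable {ℓ : ι → ℕ} (d : ι → Fin (n + 1))

theorem sum_add_const_le_add_weightBelow_of_le (hsum : ∑ j, ℓ j = n) {c : Fin (n + 1)} {i : ℕ}
    (hi : i < n) (hci : (c : ℕ) ≤ i) :
    ∑ j ∈ univ.filter (fun j => ((d j + c : Fin (n + 1)) : ℕ) ≤ i), ℓ j
      + weightBelow ℓ d (n + 1 - c) = weightBelow ℓ d (i + 1 - c) + n := by
  simp only [weightBelow, sum_filter, ← hsum, ← sum_add_distrib]
  refine sum_congr rfl fun j _ => ?_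
  have := Fin.val_add_eq_ite (d j) c
  have := (d j).isLt
  split_ifs at * <;> omega

theorem sum_add_const_le_add_weightBelow_of_lt {c : Fin (n + 1)} {i : ℕ} (hic : i < c) :
    ∑ j ∈ univ.filter (fun j => ((d j + c : Fin (n + 1)) : ℕ) ≤ i), ℓ j
      + weightBelow ℓ d (n + 1 - c) = weightBelow ℓ d (n + 2 + i - c) := by
  simp only [weightBelow, sum_filter, ← sum_add_distrib]
  refine sum_congr rfl fun j _ => ?_
  have := Fin.val_add_eq_ite (d j) c
  have := (d j).isLt
  split_ifs at * <;> omega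

-- After the shift by `c`, the street starts at the old position `n + 1 - c`.
theorem isWeightedParking_add_const_iff (hsum : ∑ j, ℓ j = n) (c : Fin (n + 1)) :
    IsWeightedParking ℓ (fun j => ((d j + c : Fin (n + 1)) : ℕ)) n ↔
      IsFirstMinimizer (fun u => (weightBelow ℓ d u : ℤ) - u) 1 (n + 1) (n + 1 - c) := by
  have hc := c.isLt
  simp only [IsWeightedParking, IsFirstMinimizer]
  constructor
  · intro h
    refine ⟨by omega, by omega, fun u hu hur => ?_, fun u hru hun => ?_⟩
    · have := sum_add_const_le_add_weightBelow_of_le d hsum (c := c) (i := u + c - 1)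
        (by omega) (by omega)
      have := h (u + c - 1) (by omega)
      rw [show u + c - 1 + 1 - c = u by omega] at *
      omega
    · have := sum_add_const_le_add_weightBelow_of_lt (ℓ := ℓ) d (c := c) (i := u + c - n - 2)
        (by omega)
      have := h (u + c - n - 2) (by omega)
      rw [show n + 2 + (u + c - n - 2) - c = u by omega] at *
      omega
  · rintro ⟨-, -, hbefore, hafter⟩ i hi
    rcases le_or_gt (c : ℕ) i with hci | hic
    · have := sum_add_const_le_add_weightBelow_of_le d hsum hi hci
      have := hbefore (i + 1 - c) (by omega) (by omega)
      omega
    · have := sum_add_const_le_add_weightBelow_of_lt (ℓ := ℓ) d hic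
      have := hafter (n + 2 + i - c) (by omega) (by omega)
      omega

theorem existsUnique_isWeightedParking_add_const (hsum : ∑ j, ℓ j = n) :
    ∃! c : Fin (n + 1), IsWeightedParking ℓ (fun j => ((d j + c : Fin (n + 1)) : ℕ)) n := by
  obtain ⟨r, hr, hr_unique⟩ :=
    existsUnique_isFirstMinimizer (fun u => (weightBelow ℓ d u : ℤ) - u) (by omega : 1 ≤ n + 1)
  have hr1 := hr.1
  have hrn := hr.2.1
  refine ⟨⟨n + 1 - r, by omega⟩, ?_, fun c hc => ?_⟩
  · beta_reduce
    rw [isWeightedParking_add_const_iff d hsum]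
    simpa [show n + 1 - (n + 1 - r) = r by omega] using hr
  · have := hr_unique _ ((isWeightedParking_add_const_iff d hsum c).mp hc)
    exact Fin.ext (by simp only; omega)

end WeightedParking

theorem card_cyclicallyStrictMono_isWeightedParking {k n : ℕ} [NeZero k] {ℓ : Fin k → ℕ}
    (hℓ : ∀ j, 0 < ℓ j) (hsum : ∑ j, ℓ j = n) :
    Nat.card {g : Fin k → Fin n // CyclicallyStrictMono g ∧ IsWeightedParking ℓ (fun j => g j) n}
      = Nat.card {d : Fin k → Fin (n + 1) // StrictMono d ∧ d 0 = 0} := by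
  set normalize : (Fin k → Fin n) → Fin k → Fin (n + 1) :=
    fun g j => (g j).castSucc - (g 0).castSucc
  have hpark : ∀ g : Fin k → Fin n, IsWeightedParking ℓ (fun j => g j) n ↔
      IsWeightedParking ℓ (fun j => ((normalize g j + (g 0).castSucc : Fin (n + 1)) : ℕ)) n := by
    simp [normalize]
  refine Nat.card_eq_of_bijective
    (fun g => ⟨normalize g.1, (Fin.castSuccOrderEmb.cyclicallyStrictMono_comp_iff.mpr
      g.2.1).strictMono_sub_apply_zero, sub_self _⟩) ⟨?_, ?_⟩
  · intro ⟨g, _, hg⟩ ⟨g', _, hg'⟩ hgg'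
    have hnorm : normalize g = normalize g' := congrArg Subtype.val hgg'
    have h0 : (g 0).castSucc = (g' 0).castSucc :=
      (existsUnique_isWeightedParking_add_const (normalize g) hsum).unique
        ((hpark g).mp hg) (hnorm ▸ (hpark g').mp hg')
    refine Subtype.ext (funext fun j => Fin.castSucc_injective _ ?_)
    calc (g j).castSucc = normalize g j + (g 0).castSucc := (sub_add_cancel _ _).symm
      _ = normalize g' j + (g' 0).castSucc := by rw [hnorm, h0]
      _ = (g' j).castSucc := sub_add_cancel _ _
  · rintro ⟨d, hd, hd0⟩
    obtain ⟨c, hc, -⟩ := existsUnique_isWeightedParking_add_const d hsum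
    have hlt := hc.lt hℓ hsum
    set g : Fin k → Fin n := fun j => (d j + c).castLT (hlt j)
    have hg : Fin.castSuccOrderEmb ∘ g = fun j => d j + c :=
      funext fun j => Fin.castSucc_castLT _ _
    refine ⟨⟨g, Fin.castSuccOrderEmb.cyclicallyStrictMono_comp_iff.mp
      (hg ▸ hd.cyclicallyStrictMono_add_const c), by simpa [g] using hc⟩, ?_⟩
    refine Subtype.ext (funext fun j => ?_)
    have hg' : ∀ j, (g j).castSucc = d j + c := congrFun hg
    simp only [normalize, hg', add_sub_add_right_eq_sub, hd0, sub_zero]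

def strictMonoFixingZeroEquiv (K n : ℕ) :
    {d : Fin (K + 1) → Fin (n + 1) // StrictMono d ∧ d 0 = 0} ≃ (Fin K ↪o Fin n) where
  toFun d := OrderEmbedding.ofStrictMono
    (fun j => (d.1 j.succ).pred (d.2.2.symm.trans_lt (d.2.1 j.succ_pos)).ne')
    fun _ _ hij => Fin.pred_lt_pred_iff.mpr (d.2.1 (Fin.succ_lt_succ_iff.mpr hij))
  invFun e := ⟨Fin.cons 0 fun j => (e j).succ, fun i j hij => by
      cases j using Fin.cases with
      | zero => exact absurd hij (Fin.not_lt_zero i)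
      | succ j =>
        cases i using Fin.cases with
        | zero => exact Fin.succ_pos _
        | succ i => simpa using Fin.succ_lt_succ_iff.mp hij, rfl⟩
  left_inv d := by
    refine Subtype.ext (funext fun j => ?_)
    cases j using Fin.cases with
    | zero => simp [d.2.2]
    | succ j => exact Fin.succ_pred (d.1 j.succ) (d.2.2.symm.trans_lt (d.2.1 j.succ_pos)).ne'
  right_inv e := by ext; simp

theorem card_strictMono_apply_zero_eq_zero (K n : ℕ) :
    Nat.card {d : Fin (K + 1) → Fin (n + 1) // StrictMono d ∧ d 0 = 0} = n.choose K := by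
  rw [Nat.card_congr ((strictMonoFixingZeroEquiv K n).trans Set.powersetCard.ofFinEmbEquiv),
    Set.powersetCard.card, Nat.card_fin]

theorem Function.Surjective.card_subtype_eq_card_subtype_comp {α β γ : Type*} {p : α → β}
    (hp : p.Surjective) {Q : (α → γ) → Prop} (hQ : ∀ a, Q a → ∃ g, a = g ∘ p) :
    Nat.card {a // Q a} = Nat.card {g : β → γ // Q (g ∘ p)} := by
  refine (Nat.card_eq_of_bijective (fun g => ⟨g.1 ∘ p, g.2⟩) ⟨fun g g' h => ?_, fun a => ?_⟩).symm
  · exact Subtype.ext (hp.injective_comp_right (congrArg Subtype.val h))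
  · obtain ⟨g, hg⟩ := hQ a.1 a.2
    exact ⟨⟨g, hg ▸ a.2⟩, Subtype.ext hg.symm⟩

section Blocks

variable {n k : ℕ}

theorem card_filter_comp_le (p : Fin n → Fin k) (g : Fin k → Fin n) (i : ℕ) :
    #(univ.filter fun x => (g (p x) : ℕ) ≤ i)
      = ∑ j ∈ univ.filter (fun j => (g j : ℕ) ≤ i), #(univ.filter fun x => p x = j) := by
  rw [card_eq_sum_card_fiberwise (f := p) (t := univ.filter fun j => (g j : ℕ) ≤ i)
    fun x hx => by simpa using hx]
  refine sum_congr rfl fun j hj => congrArg card ?_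
  ext x
  simp only [mem_filter, mem_univ, true_and] at hj ⊢
  exact ⟨And.right, fun hx => ⟨hx ▸ hj, hx⟩⟩

theorem isParkingFunction_comp_iff (p : Fin n → Fin k) (g : Fin k → Fin n) :
    IsParkingFunction (g ∘ p) ↔
      IsWeightedParking (fun j => #(univ.filter fun x => p x = j)) (fun j => g j) n := by
  simp only [IsParkingFunction, IsWeightedParking, ← card_filter_comp_le, Fin.forall_iff,
    Function.comp_apply, Fin.le_def]

variable [NeZero k] {A : Fin k → Finset (Fin n)} {p : Fin n → Fin k}

theorem isOfType_iff (hA : ∀ x j, x ∈ A j ↔ p x = j) (hp : p.Surjective) (a : Fin n → Fin n) :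
    IsOfType a A ↔ ∃ g : Fin k → Fin n, CyclicallyStrictMono g ∧ a = g ∘ p := by
  have hrot : ∀ (s : ℕ) (hs : s < k) (j : Fin k) x,
      x ∈ A ⟨((j : ℕ) + s) % k, Nat.mod_lt _ j.pos⟩ ↔ p x = j + ⟨s, hs⟩ := fun s hs j x => by
    rw [hA]; exact iff_of_eq (congrArg _ (Fin.ext (Fin.val_add j ⟨s, hs⟩).symm))
  constructor
  · rintro ⟨s, hs, -, -, hfib, hmono⟩
    simp only [hrot s hs] at hfib hmono
    refine ⟨fun j => a (p.surjInv hp j), ⟨⟨s, hs⟩, fun i j hij => hmono i j _ ?_ _ ?_ hij⟩,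
      funext fun x => (hfib (p x - ⟨s, hs⟩) (p x - ⟨s, hs⟩) x ?_ (p.surjInv hp (p x)) ?_).mpr rfl⟩
      <;> simp [Function.surjInv_eq hp]
  · rintro ⟨g, ⟨t, ht⟩, rfl⟩
    refine ⟨t, t.isLt, fun j => ?_, fun x => ⟨p x - t, ?_⟩, fun i j x hx y hy => ?_,
      fun i j x hx y hy hij => ?_⟩
    · exact ⟨p.surjInv hp (j + t), by simp [hrot t t.isLt, Function.surjInv_eq hp]⟩
    · simp [hrot t t.isLt]
    · simp only [hrot t t.isLt, Fin.eta] at hx hy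
      simp [hx, hy, ht.injective.eq_iff]
    · simp only [hrot t t.isLt, Fin.eta] at hx hy
      simpa [hx, hy] using ht hij

theorem isOfType_comp_iff (hA : ∀ x j, x ∈ A j ↔ p x = j) (hp : p.Surjective)
    (g : Fin k → Fin n) : IsOfType (g ∘ p) A ↔ CyclicallyStrictMono g := by
  rw [isOfType_iff hA hp]
  refine ⟨fun ⟨g', hg', h⟩ => ?_, fun hg => ⟨g, hg, rfl⟩⟩
  rwa [hp.injective_comp_right h]

end Blocks

theorem pf_type_count (n k : ℕ) (hn : 1 ≤ n) (A : Fin k → Finset (Fin n))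
    (hne : ∀ j, (A j).Nonempty) (hcov : ∀ x : Fin n, ∃! j, x ∈ A j) :
    Nat.card {a : Fin n → Fin n // IsParkingFunction a ∧ IsOfType a A} =
      n.choose (k - 1) := by
  choose p hp using fun x => (hcov x).exists
  have hA : ∀ x j, x ∈ A j ↔ p x = j := fun x j =>
    ⟨fun h => (hcov x).unique (hp x) h, fun h => h ▸ hp x⟩
  have hsurj : p.Surjective := fun j => (hne j).imp fun x hx => (hA x j).mp hx
  obtain ⟨K, rfl⟩ := Nat.exists_eq_add_one.mpr (p ⟨0, hn⟩).pos
  set ℓ : Fin (K + 1) → ℕ := fun j => #(univ.filter fun x => p x = j)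
  have hℓ : ∀ j, 0 < ℓ j := fun j =>
    card_pos.mpr ((hsurj j).imp fun x hx => by simpa using hx)
  have hsum : ∑ j, ℓ j = n := by
    simpa using (card_eq_sum_card_fiberwise (f := p) (s := univ) (t := univ) (by simp)).symm
  calc Nat.card {a : Fin n → Fin n // IsParkingFunction a ∧ IsOfType a A}
      = Nat.card {g : Fin (K + 1) → Fin n // IsParkingFunction (g ∘ p) ∧ IsOfType (g ∘ p) A} :=
        hsurj.card_subtype_eq_card_subtype_comp fun a ha =>
          ((isOfType_iff hA hsurj a).mp ha.2).imp fun _ hg => hg.2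
    _ = Nat.card {g : Fin (K + 1) → Fin n //
          CyclicallyStrictMono g ∧ IsWeightedParking ℓ (fun j => g j) n} := by
        simp only [isParkingFunction_comp_iff, isOfType_comp_iff hA hsurj, and_comm, ℓ]
    _ = Nat.card {d : Fin (K + 1) → Fin (n + 1) // StrictMono d ∧ d 0 = 0} :=
        card_cyclicallyStrictMono_isWeightedParking hℓ hsum
    _ = n.choose (K + 1 - 1) := card_strictMono_apply_zero_eq_zero K n

end
end

section
/- Let n ≥ 1 and let 𝔄 = (A_1,…,A_k) be an ordered partition of {1,…,n} into k nonempty blocks. The number of rook words of length n that are of type 𝔄 equals binom(n, k−1). -/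
/-!
A word of type `𝔄` is determined by its image `X`, a `k`-subset of the letters, together with
its first letter `x ∈ X` (which fixes the rotation), and every such pair occurs. The word is a
rook word exactly when `X` contains every letter `≤ x`. Then `x` is the least letter missing
from `X \ {x}`, so `(X, x) ↦ X \ {x}` is a bijection onto the `(k - 1)`-subsets.
-/

open Finset

noncomputable section
open scoped Classical

theorem Finset.lt_card_iff_mem_of_downward_closed {S : Finset ℕ}
    (hS : ∀ i ∈ S, ∀ j ≤ i, j ∈ S) {i : ℕ} : i < #S ↔ i ∈ S := by
  refine ⟨fun hi => ?_, fun hi => ?_⟩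
  · by_contra hiS
    have : S ⊆ range i := fun j hj => mem_range.2 <| lt_of_not_ge fun hij => hiS (hS j hj i hij)
    simpa using (card_le_card this).trans_lt' hi
  · have : range (i + 1) ⊆ S := fun j hj => hS i hi j (Nat.lt_succ_iff.1 (mem_range.1 hj))
    simpa using card_le_card this

theorem lt_runOf_iff_s17 {n : ℕ} (a : Fin n → Fin n) (v : Fin n) :
    (v : ℕ) < runOf a ↔ ∀ w ≤ v, w ∈ univ.image a := by
  rw [runOf, lt_card_iff_mem_of_downward_closed, mem_filter]
  · simp only [mem_range, v.isLt, true_and, mem_image, mem_univ]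
    refine ⟨fun h w hw => ?_, fun h j hj => ?_⟩
    · obtain ⟨x, hx⟩ := h w hw
      exact ⟨x, Fin.ext hx⟩
    · obtain ⟨x, hx⟩ := h ⟨j, hj.trans_lt v.isLt⟩ hj
      exact ⟨x, congrArg Fin.val hx⟩
  · intro i hi j hji
    simp only [mem_filter, mem_range] at hi ⊢
    exact ⟨hji.trans_lt hi.1, fun l hl => hi.2 l (hl.trans hji)⟩

theorem isRookWord_iff {n : ℕ} (hn : 0 < n) (a : Fin n → Fin n) :
    IsRookWord a ↔ ∀ w ≤ a ⟨0, hn⟩, w ∈ univ.image a := by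
  rw [← lt_runOf_iff_s17]
  exact ⟨fun ⟨_, h⟩ => h, fun h => ⟨hn, h⟩⟩

theorem card_finset_initialSegment_pairs {α : Type*} [Fintype α] [LinearOrder α] {k : ℕ}
    (hk : 0 < k) (hkα : k ≤ Fintype.card α) :
    Nat.card {p : Finset α × α // #p.1 = k ∧ ∀ y ≤ p.2, y ∈ p.1} =
      (Fintype.card α).choose (k - 1) := by
  have hcompl (Y : {Y : Finset α // #Y = k - 1}) : Y.1ᶜ.Nonempty := by
    rw [← card_pos, card_compl, Y.2]
    omega
  have min'_compl_eq {Y : Finset α} (hY : Yᶜ.Nonempty) {x : α} (hx : x ∉ Y)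
      (hlt : ∀ y < x, y ∈ Y) : Yᶜ.min' hY = x :=
    (Yᶜ.min'_eq_iff hY x).2
      ⟨mem_compl.2 hx, fun y hy => not_lt.1 fun h => mem_compl.1 hy (hlt y h)⟩
  rw [← Fintype.card_finset_len, ← Nat.card_eq_fintype_card]
  exact Nat.card_congr
    { toFun := fun p => ⟨p.1.1.erase p.1.2, by rw [card_erase_of_mem (p.2.2 _ le_rfl), p.2.1]⟩
      invFun := fun Y => ⟨(insert (Y.1ᶜ.min' (hcompl Y)) Y.1, Y.1ᶜ.min' (hcompl Y)), by
        have hmex := Y.1ᶜ.min'_mem (hcompl Y)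
        refine ⟨by rw [card_insert_of_notMem (mem_compl.1 hmex), Y.2]; omega, fun y hy => ?_⟩
        rcases hy.lt_or_eq with hy | rfl
        · exact mem_insert_of_mem <| by_contra fun h => hy.not_ge (min'_le _ _ (mem_compl.2 h))
        · exact mem_insert_self _ _⟩
      left_inv := fun ⟨(X, x), hX, hx⟩ => by
        have hmex (hY) : (X.erase x)ᶜ.min' hY = x := min'_compl_eq hY (notMem_erase x X)
          fun y hy => mem_erase.2 ⟨hy.ne, hx y hy.le⟩
        apply Subtype.ext
        dsimp only
        rw [hmex, insert_erase (hx x le_rfl)]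
      right_inv := fun Y => by
        simp only [erase_insert (mem_compl.1 (Y.1ᶜ.min'_mem (hcompl Y)))] }

section Coimage

variable {n k : ℕ} {a : Fin n → Fin n} {B : Fin k → Finset (Fin n)}

theorem IsCoimage.strictMono (h : IsCoimage a B) : StrictMono fun j => a (h.1 j).choose :=
  fun j j' hjj' => h.2.2.2 j j' _ (h.1 j).choose_spec _ (h.1 j').choose_spec hjj'

theorem IsCoimage.image_eq (h : IsCoimage a B) :
    univ.image a = univ.image fun j => a (h.1 j).choose := by
  ext y
  simp only [mem_image, mem_univ, true_and]
  constructor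
  · rintro ⟨x, rfl⟩
    obtain ⟨j, hj⟩ := h.2.1 x
    exact ⟨j, (h.2.2.1 _ _ _ (h.1 j).choose_spec _ hj).2 rfl⟩
  · rintro ⟨j, rfl⟩
    exact ⟨_, rfl⟩

theorem IsCoimage.card_image (h : IsCoimage a B) : #(univ.image a) = k := by
  rw [h.image_eq, card_image_of_injective _ h.strictMono.injective, card_univ,
    Fintype.card_fin]

theorem IsCoimage.apply_eq_orderEmbOfFin (h : IsCoimage a B) {X : Finset (Fin n)}
    (hX : #X = k) (himg : univ.image a = X) {j : Fin k} {x : Fin n} (hx : x ∈ B j) :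
    a x = X.orderEmbOfFin hX j := by
  subst himg
  rw [← orderEmbOfFin_unique hX (fun j => mem_image_of_mem _ (mem_univ _)) h.strictMono]
  exact (h.2.2.1 _ _ _ hx _ (h.1 j).choose_spec).2 rfl

theorem exists_isCoimage_image_eq (hne : ∀ j, (B j).Nonempty) (hB : ∀ x, ∃! j, x ∈ B j)
    {X : Finset (Fin n)} (hX : #X = k) : ∃ a, IsCoimage a B ∧ univ.image a = X := by
  let block : Fin n → Fin k := fun x => (hB x).exists.choose
  have block_eq {x j} (hx : x ∈ B j) : block x = j := (hB x).unique (hB x).exists.choose_spec hx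
  have block_surjective : Function.Surjective block := fun j =>
    ⟨(hne j).choose, block_eq (hne j).choose_spec⟩
  let e := X.orderEmbOfFin hX
  refine ⟨fun x => e (block x), ⟨hne, fun x => ⟨_, (hB x).exists.choose_spec⟩, ?_, ?_⟩, ?_⟩
  · intro j j' x hx y hy
    simp only [block_eq hx, block_eq hy, e.injective.eq_iff]
  · intro j j' x hx y hy hjj'
    simpa only [block_eq hx, block_eq hy] using e.strictMono hjj'
  · change univ.image (e ∘ block) = X
    rw [← image_image, image_univ_of_surjective block_surjective, image_orderEmbOfFin_univ]

-- `j + t` in `Fin k` unfolds to `⟨(j + t) % k, _⟩`, the rotation written out in `IsOfType`.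
theorem isOfType_iff_s17 {A : Fin k → Finset (Fin n)} :
    IsOfType a A ↔ ∃ t : Fin k, IsCoimage a fun j => A (j + t) :=
  ⟨fun ⟨s, hs, h⟩ => ⟨⟨s, hs⟩, h⟩, fun ⟨t, h⟩ => ⟨t, t.isLt, h⟩⟩

end Coimage

theorem Fintype.card_le_of_disjoint_nonempty {ι α : Type*} [Fintype ι] [Fintype α]
    {A : ι → Finset α} (hne : ∀ i, (A i).Nonempty)
    (hdisj : ∀ x i i', x ∈ A i → x ∈ A i' → i = i') : Fintype.card ι ≤ Fintype.card α :=
  Fintype.card_le_of_injective (fun i => (hne i).choose) fun i i' (h : (hne i).choose = _) =>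
    hdisj _ i i' (hne i).choose_spec (h ▸ (hne i').choose_spec)

section OfType

variable {n k : ℕ} [NeZero k] {A : Fin k → Finset (Fin n)}

theorem IsCoimage.apply_eq_of_rotate {a : Fin n → Fin n} {t : Fin k}
    (h : IsCoimage a fun j => A (j + t)) {X : Finset (Fin n)} (hX : #X = k)
    (himg : univ.image a = X) {i : Fin k} {x : Fin n} (hx : x ∈ A i) :
    a x = X.orderEmbOfFin hX (i - t) :=
  h.apply_eq_orderEmbOfFin hX himg (by rwa [sub_add_cancel])

theorem IsOfType.eq_of_image_eq_of_apply_eq (hcov : ∀ x, ∃ j, x ∈ A j)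
    {a b : Fin n → Fin n} (ha : IsOfType a A) (hb : IsOfType b A)
    (himg : univ.image a = univ.image b) {x₀ : Fin n} (hx₀ : a x₀ = b x₀) : a = b := by
  obtain ⟨t, hat⟩ := isOfType_iff_s17.1 ha
  obtain ⟨t', hbt'⟩ := isOfType_iff_s17.1 hb
  have hX := hat.card_image
  have hval {x i} (hx : x ∈ A i) :
      a x = (univ.image a).orderEmbOfFin hX (i - t) ∧
        b x = (univ.image a).orderEmbOfFin hX (i - t') :=
    ⟨hat.apply_eq_of_rotate hX rfl hx, hbt'.apply_eq_of_rotate hX himg.symm hx⟩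
  obtain ⟨i₀, hi₀⟩ := hcov x₀
  have htt' : t = t' := by
    rw [(hval hi₀).1, (hval hi₀).2] at hx₀
    exact sub_right_injective (((univ.image a).orderEmbOfFin hX).injective hx₀)
  funext x
  obtain ⟨i, hi⟩ := hcov x
  rw [(hval hi).1, (hval hi).2, htt']

theorem exists_isOfType_image_eq_apply_eq (hne : ∀ j, (A j).Nonempty)
    (hcov : ∀ x : Fin n, ∃! j, x ∈ A j) {X : Finset (Fin n)} (hX : #X = k) {x : Fin n}
    (hx : x ∈ X) (x₀ : Fin n) : ∃ a, IsOfType a A ∧ univ.image a = X ∧ a x₀ = x := by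
  obtain ⟨r, rfl⟩ : x ∈ Set.range (X.orderEmbOfFin hX) := by simpa using hx
  obtain ⟨i₀, hi₀, -⟩ := hcov x₀
  have hcov' (y : Fin n) : ∃! j, y ∈ A (j + (i₀ - r)) := by
    obtain ⟨i, hi, huniq⟩ := hcov y
    exact ⟨i - (i₀ - r), by simpa only [sub_add_cancel] using hi,
      fun j hj => by rw [← huniq _ hj, add_sub_cancel_right]⟩
  obtain ⟨a, ha, himg⟩ := exists_isCoimage_image_eq (fun j => hne _) hcov' hX
  refine ⟨a, isOfType_iff_s17.2 ⟨_, ha⟩, himg, ?_⟩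
  rw [ha.apply_eq_of_rotate hX himg hi₀, sub_sub_cancel]

theorem card_rookWords_ofType (hn : 0 < n) (hne : ∀ j, (A j).Nonempty)
    (hcov : ∀ x : Fin n, ∃! j, x ∈ A j) :
    Nat.card {a : Fin n → Fin n // IsRookWord a ∧ IsOfType a A} =
      Nat.card {p : Finset (Fin n) × Fin n // #p.1 = k ∧ ∀ y ≤ p.2, y ∈ p.1} := by
  refine Nat.card_eq_of_bijective (fun a => ⟨(univ.image a.1, a.1 ⟨0, hn⟩), ?_⟩) ⟨?_, ?_⟩
  · obtain ⟨t, h⟩ := isOfType_iff_s17.1 a.2.2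
    exact ⟨h.card_image, (isRookWord_iff hn _).1 a.2.1⟩
  · rintro ⟨a, _, ha⟩ ⟨b, _, hb⟩ hab
    simp only [Subtype.mk.injEq, Prod.mk.injEq] at hab
    exact Subtype.ext <|
      ha.eq_of_image_eq_of_apply_eq (fun x => (hcov x).exists) hb hab.1 hab.2
  · rintro ⟨⟨X, x⟩, hX, hx⟩
    obtain ⟨a, ha, himg, ha₀⟩ :=
      exists_isOfType_image_eq_apply_eq hne hcov hX (hx x le_rfl) ⟨0, hn⟩
    refine ⟨⟨a, (isRookWord_iff hn a).2 (by rwa [himg, ha₀]), ha⟩, ?_⟩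
    simp only [himg, ha₀]

end OfType

theorem rw_type_count (n k : ℕ) (hn : 1 ≤ n) (A : Fin k → Finset (Fin n))
    (hne : ∀ j, (A j).Nonempty) (hcov : ∀ x : Fin n, ∃! j, x ∈ A j) :
    Nat.card {a : Fin n → Fin n // IsRookWord a ∧ IsOfType a A} =
      n.choose (k - 1) := by
  obtain ⟨j, -⟩ := (hcov ⟨0, hn⟩).exists
  have : NeZero k := ⟨j.pos.ne'⟩
  have hkn : k ≤ n := by
    simpa using Fintype.card_le_of_disjoint_nonempty hne fun x i i' => (hcov x).unique
  rw [card_rookWords_ofType hn hne hcov,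
    card_finset_initialSegment_pairs j.pos (by simpa using hkn), Fintype.card_fin]

end
end

section
/- Let n ≥ 1, let 𝔄 = (A_1,…,A_k) be an ordered partition of {1,…,n} into k nonempty blocks, and let r be an integer with 1 ≤ r ≤ k. The number of rook words a of length n with run(a) = r that are of type 𝔄 equals r · binom(n−r−1, k−r). -/
open Finset

noncomputable section
open scoped Classical

/-!
A word of type `𝔄` is determined by the rotation `s` of `𝔄` that is its coimage and by the
increasing list `V` of its values: `a p = V (t p - s)` (indices mod `k`), where `t p` is the
index of the block of `𝔄` containing `p`. Since `V` is increasing, `run(a) = r` says exactly that `V` starts with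
`1, …, r` and then skips `r + 1`, so `V` is given by an increasing map from `k - r` letters into
`{r + 2, …, n}`: `binom(n - r - 1, k - r)` choices. The rook condition says that the first letter
`V (t 1 - s)` is at most `r`, i.e. that `t 1 - s` is one of the first `r` indices, which leaves
`r` choices for `s`.
-/

namespace RookWord

variable {n k : ℕ}

lemma val_le_of_strictMono {m : ℕ} {f : Fin m → Fin n} (hf : StrictMono f) (i : Fin m) :
    (i : ℕ) ≤ f i := by
  obtain ⟨i, hi⟩ := i
  induction i with
  | zero => exact Nat.zero_le _
  | succ i ih => exact (ih (by omega)).trans_lt (hf (Fin.mk_lt_mk.2 i.lt_succ_self))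

lemma val_apply_eq_of_strictMono {m r : ℕ} {f : Fin m → Fin n} (hf : StrictMono f)
    (hr : ∀ y < r, ∃ i, (f i : ℕ) = y) (i : Fin m) (hi : (i : ℕ) < r) : (f i : ℕ) = i := by
  obtain ⟨y, hy⟩ := i
  induction y using Nat.strong_induction_on with
  | _ y ih =>
    obtain ⟨⟨i, hi'⟩, hiy⟩ := hr y hi
    obtain rfl | hlt := (hiy ▸ val_le_of_strictMono hf ⟨i, hi'⟩ : i ≤ y).eq_or_lt
    · exact hiy
    · exact absurd (hiy.symm.trans (ih i hlt hi' (hlt.trans hi))) hlt.ne'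

lemma runOf_eq_of_forall (a : Fin n → Fin n) {r : ℕ} (hlt : ∀ j < r, ∃ x, (a x : ℕ) = j)
    (hr : ¬ ∃ x, (a x : ℕ) = r) : runOf a = r := by
  have hrn : r ≤ n := by
    by_contra h
    obtain ⟨x, hx⟩ := hlt n (by omega)
    exact (a x).isLt.ne hx
  rw [runOf, ← Finset.card_range r]
  congr 1
  ext i
  simp only [mem_filter, mem_range]
  constructor
  · rintro ⟨-, hi⟩
    by_contra h
    exact hr (hi r (by omega))
  · exact fun hi => ⟨by omega, fun j hj => hlt j (by omega)⟩

lemma runOf_eq_iff (a : Fin n → Fin n) (r : ℕ) :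
    runOf a = r ↔ (∀ j < r, ∃ x, (a x : ℕ) = j) ∧ ¬ ∃ x, (a x : ℕ) = r := by
  have hex : ∃ m, ¬ ∃ x, (a x : ℕ) = m := ⟨n, fun ⟨x, hx⟩ => (a x).isLt.ne hx⟩
  have hmin : ∀ j < Nat.find hex, ∃ x, (a x : ℕ) = j := fun j hj => not_not.1 (Nat.find_min hex hj)
  refine ⟨fun h => ?_, fun h => runOf_eq_of_forall a h.1 h.2⟩
  rw [← h, runOf_eq_of_forall a hmin (Nat.find_spec hex)]
  exact ⟨hmin, Nat.find_spec hex⟩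

lemma le_of_partition (A : Fin k → Finset (Fin n)) (hne : ∀ j, (A j).Nonempty)
    (hcov : ∀ x : Fin n, ∃! j, x ∈ A j) : k ≤ n := by
  simpa using Fintype.card_le_of_injective (fun j => (hne j).choose)
    fun j j' (h : (hne j).choose = (hne j').choose) =>
      (hcov _).unique (hne j).choose_spec (h ▸ (hne j').choose_spec)

section Partition

variable (A : Fin k → Finset (Fin n)) (hcov : ∀ x : Fin n, ∃! j, x ∈ A j)

def blockIdx (x : Fin n) : Fin k := Fintype.choose _ (hcov x)

lemma mem_blockIdx (x : Fin n) : x ∈ A (blockIdx A hcov x) := Fintype.choose_spec _ (hcov x)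

lemma blockIdx_eq_of_mem {x : Fin n} {j : Fin k} (h : x ∈ A j) : blockIdx A hcov x = j :=
  (hcov x).unique (mem_blockIdx A hcov x) h

lemma isOfType_iff {a : Fin n → Fin n} :
    IsOfType a A ↔ ∃ s : Fin k, IsCoimage a (A <| · + s) := by
  have hrot (s : ℕ) (hs : s < k) (j : Fin k) :
      (⟨((j : ℕ) + s) % k, Nat.mod_lt _ j.pos⟩ : Fin k) = j + ⟨s, hs⟩ :=
    Fin.ext (Fin.val_add j ⟨s, hs⟩).symm
  constructor
  · rintro ⟨s, hs, h⟩
    exact ⟨⟨s, hs⟩, by simpa only [hrot s hs] using h⟩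
  · rintro ⟨s, h⟩
    exact ⟨s, s.isLt, by simpa only [hrot s s.isLt, Fin.eta] using h⟩

variable [NeZero k]

/-- For strictly increasing `V`, the word with coimage `A` rotated by `s` and values `V`. -/
def wordOf (s : Fin k) (V : Fin k → Fin n) (p : Fin n) : Fin n := V (blockIdx A hcov p - s)

variable {A hcov}

lemma wordOf_eq_of_mem {s i : Fin k} {V : Fin k → Fin n} {p : Fin n} (hp : p ∈ A (i + s)) :
    wordOf A hcov s V p = V i := by
  rw [wordOf, blockIdx_eq_of_mem A hcov hp, add_sub_cancel_right]

lemma exists_wordOf_iff (hne : ∀ j, (A j).Nonempty) (s : Fin k) (V : Fin k → Fin n)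
    (P : Fin n → Prop) : (∃ p, P (wordOf A hcov s V p)) ↔ ∃ i, P (V i) := by
  refine ⟨fun ⟨p, hp⟩ => ⟨_, hp⟩, fun ⟨i, hi⟩ => ?_⟩
  obtain ⟨p, hp⟩ := hne (i + s)
  exact ⟨p, (wordOf_eq_of_mem hp).symm ▸ hi⟩

lemma wordOf_injective (hne : ∀ j, (A j).Nonempty) (s : Fin k) :
    Function.Injective (wordOf A hcov s) := by
  intro V V' h
  funext i
  obtain ⟨p, hp⟩ := hne (i + s)
  rw [← wordOf_eq_of_mem (hcov := hcov) (V := V) hp, h, wordOf_eq_of_mem hp]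

lemma isCoimage_wordOf (hne : ∀ j, (A j).Nonempty) (s : Fin k) {V : Fin k → Fin n}
    (hV : StrictMono V) : IsCoimage (wordOf A hcov s V) (A <| · + s) := by
  refine ⟨fun j => hne _, fun x => ⟨blockIdx A hcov x - s, ?_⟩, fun j j' x hx y hy => ?_,
    fun j j' x hx y hy h => ?_⟩
  · simpa using mem_blockIdx A hcov x
  · rw [wordOf_eq_of_mem hx, wordOf_eq_of_mem hy, hV.injective.eq_iff]
  · rw [wordOf_eq_of_mem hx, wordOf_eq_of_mem hy]
    exact hV h

lemma exists_strictMono_eq_wordOf {a : Fin n → Fin n} {s : Fin k}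
    (h : IsCoimage a (A <| · + s)) : ∃ V, StrictMono V ∧ a = wordOf A hcov s V := by
  obtain ⟨hne, -, hfib, hlt⟩ := h
  choose rep hrep using hne
  refine ⟨fun j => a (rep j), fun j j' hjj => hlt j j' _ (hrep j) _ (hrep j') hjj,
    funext fun p => (hfib _ _ p ?_ _ (hrep _)).2 rfl⟩
  simpa using mem_blockIdx A hcov p

end Partition

lemma card_fin_orderEmbedding {α : Type*} [LinearOrder α] (m : ℕ) :
    Nat.card (Fin m ↪o α) = (Nat.card α).choose m := by
  rw [Nat.card_congr Set.powersetCard.ofFinEmbEquiv, Set.powersetCard.card]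

lemma card_subtype_lt_val (n r : ℕ) : Nat.card {x : Fin n // r < (x : ℕ)} = n - r - 1 := by
  have h := card_filter_add_card_filter_not (s := (univ : Finset (Fin n))) (· < r + 1)
  rw [Fin.card_filter_val_lt, card_univ, Fintype.card_fin] at h
  simp only [not_lt, Nat.succ_le_iff] at h
  rw [Nat.card_eq_fintype_card, Fintype.card_subtype]
  omega

section IdAppend

variable {r : ℕ} (hkn : k ≤ n) (W : Fin (k - r) ↪o {x : Fin n // r < (x : ℕ)})

def idAppend (i : Fin k) : Fin n :=
  if h : (i : ℕ) < r then Fin.castLE hkn i else W ⟨i - r, by have := i.isLt; omega⟩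

lemma val_idAppend_of_lt {i : Fin k} (h : (i : ℕ) < r) : (idAppend hkn W i : ℕ) = i := by
  simp [idAppend, h]

lemma idAppend_of_le {i : Fin k} (h : r ≤ (i : ℕ)) :
    idAppend hkn W i = W ⟨i - r, by have := i.isLt; omega⟩ := by
  simp [idAppend, not_lt.2 h]

lemma lt_idAppend_of_le {i : Fin k} (h : r ≤ (i : ℕ)) : r < (idAppend hkn W i : ℕ) :=
  idAppend_of_le hkn W h ▸ (W _).2

lemma strictMono_idAppend : StrictMono (idAppend hkn W) := by
  intro i i' hii
  rcases lt_or_ge (i' : ℕ) r with h' | h'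
  · show (idAppend hkn W i : ℕ) < idAppend hkn W i'
    rw [val_idAppend_of_lt hkn W h', val_idAppend_of_lt hkn W (lt_trans hii h')]
    exact hii
  rcases lt_or_ge (i : ℕ) r with h | h
  · exact (val_idAppend_of_lt hkn W h).trans_lt (h.trans (lt_idAppend_of_le hkn W h'))
  · rw [idAppend_of_le hkn W h, idAppend_of_le hkn W h']
    exact W.strictMono (Fin.mk_lt_mk.2 (Nat.sub_lt_sub_right h hii))

end IdAppend

section Count

variable (A : Fin k → Finset (Fin n)) (hcov : ∀ x : Fin n, ∃! j, x ∈ A j) [NeZero k] {r : ℕ}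
  (hrk : r ≤ k) (hkn : k ≤ n) (hn : 0 < n)

/-- Rotating by `t₀ - j`, where `t₀` is the block of position `0`, puts position `0` into block
`j` of the coimage, so that the first letter is `j < r`. -/
def rookWordOf (j : Fin r) (W : Fin (k - r) ↪o {x : Fin n // r < (x : ℕ)}) : Fin n → Fin n :=
  wordOf A hcov (blockIdx A hcov ⟨0, hn⟩ - Fin.castLE hrk j) (idAppend hkn W)

variable {A hcov}

lemma val_rookWordOf_zero (j : Fin r) (W : Fin (k - r) ↪o {x : Fin n // r < (x : ℕ)}) :
    (rookWordOf A hcov hrk hkn hn j W ⟨0, hn⟩ : ℕ) = j := by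
  rw [rookWordOf, wordOf, sub_sub_cancel, val_idAppend_of_lt hkn W j.isLt, Fin.val_castLE]

lemma rookWordOf_spec (hne : ∀ j, (A j).Nonempty) (j : Fin r)
    (W : Fin (k - r) ↪o {x : Fin n // r < (x : ℕ)}) :
    IsRookWord (rookWordOf A hcov hrk hkn hn j W) ∧ runOf (rookWordOf A hcov hrk hkn hn j W) = r ∧
      IsOfType (rookWordOf A hcov hrk hkn hn j W) A := by
  have hrun : runOf (rookWordOf A hcov hrk hkn hn j W) = r := by
    refine runOf_eq_of_forall _ (fun y hy => ?_) fun h => ?_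
    · exact (exists_wordOf_iff hne _ _ (fun x : Fin n => (x : ℕ) = y)).2
        ⟨⟨y, hy.trans_le hrk⟩, val_idAppend_of_lt hkn W hy⟩
    · obtain ⟨i, hi⟩ := (exists_wordOf_iff hne _ _ (fun x : Fin n => (x : ℕ) = r)).1 h
      rcases lt_or_ge (i : ℕ) r with h | h
      · exact h.ne (hi ▸ val_idAppend_of_lt hkn W h).symm
      · exact (lt_idAppend_of_le hkn W h).ne' hi
  refine ⟨⟨hn, ?_⟩, hrun,
    (isOfType_iff A).2 ⟨_, isCoimage_wordOf hne _ (strictMono_idAppend hkn W)⟩⟩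
  rw [hrun, val_rookWordOf_zero]
  exact j.isLt

lemma rookWordOf_injective (hne : ∀ j, (A j).Nonempty) :
    Function.Injective fun q : Fin r × (Fin (k - r) ↪o {x : Fin n // r < (x : ℕ)}) =>
      rookWordOf A hcov hrk hkn hn q.1 q.2 := by
  rintro ⟨j, W⟩ ⟨j', W'⟩ h
  obtain rfl : j = j' := Fin.ext <| by
    rw [← val_rookWordOf_zero hrk hkn hn j W, ← val_rookWordOf_zero hrk hkn hn j' W']
    exact congrArg (fun a => (a ⟨0, hn⟩ : ℕ)) h
  have hV := wordOf_injective hne _ h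
  refine Prod.ext rfl (DFunLike.ext _ _ fun q => Subtype.ext ?_)
  have hq := congrFun hV ⟨r + q, by omega⟩
  rw [idAppend_of_le hkn W (by simp), idAppend_of_le hkn W' (by simp)] at hq
  simpa using hq

lemma exists_rookWordOf_eq (hne : ∀ j, (A j).Nonempty) {a : Fin n → Fin n}
    (hrook : IsRookWord a) (hrun : runOf a = r) (htype : IsOfType a A) :
    ∃ j W, rookWordOf A hcov hrk hkn hn j W = a := by
  obtain ⟨s, hco⟩ := (isOfType_iff A).1 htype
  obtain ⟨V, hV, rfl⟩ := exists_strictMono_eq_wordOf (hcov := hcov) hco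
  obtain ⟨_, hfirst⟩ := hrook
  obtain ⟨hlow, hnot⟩ := (runOf_eq_iff _ r).1 hrun
  have hV_lt : ∀ i : Fin k, (i : ℕ) < r → (V i : ℕ) = i :=
    val_apply_eq_of_strictMono hV fun y hy =>
      (exists_wordOf_iff hne _ _ (fun x : Fin n => (x : ℕ) = y)).1 (hlow y hy)
  have hV_gt : ∀ i : Fin k, r ≤ (i : ℕ) → r < (V i : ℕ) := fun i hi =>
    (hi.trans (val_le_of_strictMono hV i)).lt_of_ne fun h =>
      hnot ((exists_wordOf_iff hne _ _ (fun x : Fin n => (x : ℕ) = r)).2 ⟨i, h.symm⟩)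
  let W : Fin (k - r) ↪o {x : Fin n // r < (x : ℕ)} := OrderEmbedding.ofStrictMono
    (fun q => ⟨V ⟨r + q, by omega⟩, hV_gt _ (Nat.le_add_right _ _)⟩)
    fun q q' h => hV (Fin.mk_lt_mk.2 (Nat.add_lt_add_left h r))
  have hVW : idAppend hkn W = V := funext fun i => by
    rcases lt_or_ge (i : ℕ) r with h | h
    · exact Fin.ext ((val_idAppend_of_lt hkn W h).trans (hV_lt i h).symm)
    · rw [idAppend_of_le hkn W h]
      exact congrArg V (Fin.ext (Nat.add_sub_of_le h))
  have hj : ((blockIdx A hcov ⟨0, hn⟩ - s : Fin k) : ℕ) < r := by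
    by_contra h
    rw [hrun] at hfirst
    exact ((hV_gt _ (not_lt.1 h)).trans hfirst).false
  refine ⟨⟨_, hj⟩, W, ?_⟩
  rw [rookWordOf, hVW]
  exact congrArg (wordOf A hcov · V) (sub_sub_cancel _ _)

end Count

end RookWord

theorem rw_run_type_count_general (n k r : ℕ) (A : Fin k → Finset (Fin n))
    (hne : ∀ j, (A j).Nonempty) (hcov : ∀ x : Fin n, ∃! j, x ∈ A j)
    (hr : 1 ≤ r) (hrk : r ≤ k) :
    Nat.card {a : Fin n → Fin n //
        IsRookWord a ∧ runOf a = r ∧ IsOfType a A} =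
      r * (n - r - 1).choose (k - r) := by
  have : NeZero k := ⟨by omega⟩
  have hkn := RookWord.le_of_partition A hne hcov
  have hn : 0 < n := by omega
  let Ψ (q : Fin r × (Fin (k - r) ↪o {x : Fin n // r < (x : ℕ)})) :
      {a : Fin n → Fin n // IsRookWord a ∧ runOf a = r ∧ IsOfType a A} :=
    ⟨RookWord.rookWordOf A hcov hrk hkn hn q.1 q.2, RookWord.rookWordOf_spec hrk hkn hn hne q.1 q.2⟩
  have hΨ : Function.Bijective Ψ := by
    refine ⟨fun q q' h => RookWord.rookWordOf_injective hrk hkn hn hne (congrArg Subtype.val h), ?_⟩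
    rintro ⟨a, hrook, hrun, htype⟩
    obtain ⟨j, W, rfl⟩ :=
      RookWord.exists_rookWordOf_eq (hcov := hcov) hrk hkn hn hne hrook hrun htype
    exact ⟨(j, W), rfl⟩
  rw [← Nat.card_congr (Equiv.ofBijective Ψ hΨ), Nat.card_prod, Nat.card_fin,
    RookWord.card_fin_orderEmbedding, RookWord.card_subtype_lt_val]

theorem rw_run_type_count (n k r : ℕ) (hn : 1 ≤ n) (A : Fin k → Finset (Fin n))
    (hne : ∀ j, (A j).Nonempty) (hcov : ∀ x : Fin n, ∃! j, x ∈ A j)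
    (hr : 1 ≤ r) (hrk : r ≤ k) :
    Nat.card {a : Fin n → Fin n //
        IsRookWord a ∧ runOf a = r ∧ IsOfType a A} =
      r * (n - r - 1).choose (k - r) :=
  rw_run_type_count_general n k r A hne hcov hr hrk
end
end
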